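/- arXiv:1311.1478 — 6 statements merged into one kernel-verified Lean document; each statement's English description precedes it below -/
import Mathlib

section
/- For every integer κ ≥ 2 and positive integer n, writing (Σ_{k=-n}^{n} e^{ikx})^κ = Σ_{ℓ=-κn}^{κn} B_ℓ e^{iℓx}, the coefficients B_ℓ are nonnegative real numbers and satisfy the monotonicity property B_{ℓ₁} ≥ B_{ℓ₂} ≥ 0 whenever |ℓ₁| ≤ |ℓ₂| ≤ κn. -/
/-!
`B_ℓ^{(κ)}` counts the ways to write `ℓ` as an ordered sum of `κ` integers in `[-n, n]`, so
`B^{(κ+1)}_ℓ = ∑_{|j| ≤ n} B^{(κ)}_{ℓ-j}` is a moving-window sum of `B^{(κ)}`. Such window sums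
preserve being even and decreasing in `|ℓ|`: sliding the window from `a ≥ 0` to `a + 1` trades
`B_{a-n}` for `B_{a+n+1} ≤ B_{a-n}`. The coefficients `B_ℓ` in the statement are these counts
because the characters `x ↦ e^{iℓx}` are linearly independent (Dedekind).
-/

open Finset Complex

section Unimodal

variable {α : Type*} [PartialOrder α]

/-- Symmetric because, by antisymmetry of `≤`, such an `f` is even. -/
def IsSymmUnimodal (f : ℤ → α) : Prop :=
  ∀ ⦃a b : ℤ⦄, |a| ≤ |b| → f b ≤ f a

theorem IsSymmUnimodal.apply_neg {f : ℤ → α} (hf : IsSymmUnimodal f) (ℓ : ℤ) :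
    f (-ℓ) = f ℓ :=
  le_antisymm (hf (abs_neg ℓ).ge) (hf (abs_neg ℓ).le)

theorem isSymmUnimodal_of_apply_neg_of_succ_le {f : ℤ → α} (hneg : ∀ ℓ, f (-ℓ) = f ℓ)
    (hsucc : ∀ m : ℕ, f (m + 1) ≤ f m) : IsSymmUnimodal f := by
  have hanti : Antitone fun m : ℕ => f m := antitone_nat_of_succ_le (by exact_mod_cast hsucc)
  have hnatAbs : ∀ ℓ : ℤ, f ℓ = f ℓ.natAbs := fun ℓ => by
    rcases Int.natAbs_eq ℓ with h | h
    · rw [← h]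
    · nth_rewrite 1 [h]
      exact hneg _
  intro a b hab
  rw [Int.abs_eq_natAbs, Int.abs_eq_natAbs] at hab
  rw [hnatAbs a, hnatAbs b]
  exact hanti (mod_cast hab)

theorem isSymmUnimodal_pi_single_zero [Zero α] {x : α} (hx : 0 ≤ x) :
    IsSymmUnimodal (Pi.single 0 x : ℤ → α) := by
  intro a b hab
  rcases eq_or_ne b 0 with rfl | hb
  · rw [abs_zero, abs_nonpos_iff] at hab
    rw [hab]
  · rw [Pi.single_eq_of_ne hb]
    rcases eq_or_ne a 0 with rfl | ha
    · simpa using hx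
    · rw [Pi.single_eq_of_ne ha]

end Unimodal

section WindowSum

variable {α : Type*} [AddCommMonoid α] (n : ℕ)

noncomputable def windowSum (f : ℤ → α) (ℓ : ℤ) : α :=
  ∑ j ∈ Icc (-n : ℤ) n, f (ℓ - j)

theorem windowSum_eq_sum_Icc (f : ℤ → α) (ℓ : ℤ) :
    windowSum n f ℓ = ∑ m ∈ Icc (ℓ - n) (ℓ + n), f m := by
  refine sum_nbij' (ℓ - ·) (ℓ - ·) ?_ ?_ ?_ ?_ ?_ <;> intro j hj <;> simp_all <;> omega

theorem windowSum_neg {f : ℤ → α} (hf : ∀ ℓ, f (-ℓ) = f ℓ) (ℓ : ℤ) :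
    windowSum n f (-ℓ) = windowSum n f ℓ := by
  refine sum_nbij' Neg.neg Neg.neg (fun j hj => ?_) (fun j hj => ?_) (fun j _ => neg_neg j)
    (fun j _ => neg_neg j) fun j _ => ?_
  · simp only [mem_Icc] at hj ⊢; omega
  · simp only [mem_Icc] at hj ⊢; omega
  · rw [← hf (ℓ - -j)]
    congr 1
    ring

theorem windowSum_eq_zero_of_lt {f : ℤ → α} {N : ℤ} (hf : ∀ ℓ, N < |ℓ| → f ℓ = 0) {ℓ : ℤ}
    (hℓ : N + n < |ℓ|) : windowSum n f ℓ = 0 := by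
  refine sum_eq_zero fun j hj => hf _ ?_
  have hj : |j| ≤ n := abs_le.mpr (mem_Icc.mp hj)
  have := abs_sub_abs_le_abs_sub ℓ j
  omega

theorem IsSymmUnimodal.windowSum [PartialOrder α] [IsOrderedAddMonoid α] {f : ℤ → α}
    (hf : IsSymmUnimodal f) : IsSymmUnimodal (windowSum n f) := by
  refine isSymmUnimodal_of_apply_neg_of_succ_le (windowSum_neg n hf.apply_neg) fun m => ?_
  have hshift : Icc ((m + 1 : ℤ) - n) (m + 1 + n)
      = insert ((m : ℤ) + n + 1) (Icc (m - n + 1 : ℤ) (m + n)) := by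
    ext; simp only [mem_insert, mem_Icc]; omega
  have hbase : Icc ((m : ℤ) - n) (m + n)
      = insert ((m : ℤ) - n) (Icc (m - n + 1 : ℤ) (m + n)) := by
    ext; simp only [mem_insert, mem_Icc]; omega
  rw [windowSum_eq_sum_Icc, windowSum_eq_sum_Icc, hshift, hbase,
    sum_insert (by simp), sum_insert (by simp)]
  gcongr
  refine hf ?_
  rw [abs_of_nonneg (by omega : (0 : ℤ) ≤ m + n + 1)]
  exact abs_le.mpr ⟨by omega, by omega⟩

end WindowSum

section DirichletKernel

variable (n : ℕ)

noncomputable def dirichletPowCoeff : ℕ → ℤ → ℕ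
  | 0 => Pi.single 0 1
  | κ + 1 => windowSum n (dirichletPowCoeff κ)

theorem dirichletPowCoeff_eq_zero_of_lt {κ : ℕ} {ℓ : ℤ} (hℓ : κ * n < |ℓ|) :
    dirichletPowCoeff n κ ℓ = 0 := by
  induction κ generalizing ℓ with
  | zero => exact Pi.single_eq_of_ne (abs_pos.mp (by simpa using hℓ)) _
  | succ κ ih =>
    refine windowSum_eq_zero_of_lt n (fun _ => ih) ?_
    push_cast at hℓ
    linarith

theorem isSymmUnimodal_dirichletPowCoeff (κ : ℕ) : IsSymmUnimodal (dirichletPowCoeff n κ) := by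
  induction κ with
  | zero => exact isSymmUnimodal_pi_single_zero zero_le_one
  | succ κ ih => exact ih.windowSum n

variable {R : Type*} [CommSemiring R] (ψ : AddChar ℤ R)

theorem sum_Icc_smul_mul_sum_Icc {N : ℤ} {c : ℤ → ℕ} (hc : ∀ ℓ, N < |ℓ| → c ℓ = 0) :
    (∑ ℓ ∈ Icc (-N) N, c ℓ • ψ ℓ) * ∑ j ∈ Icc (-n : ℤ) n, ψ j
      = ∑ m ∈ Icc (-(N + n)) (N + n), windowSum n c m • ψ m := by
  simp only [windowSum, sum_smul, sum_mul, mul_sum]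
  rw [sum_comm (s := Icc (-(N + n)) (N + n))]
  refine sum_congr rfl fun j hj => ?_
  rw [mem_Icc] at hj
  refine sum_of_injOn (· + j) (add_left_injective j).injOn ?_ ?_ ?_
  · intro ℓ hℓ
    simp only [coe_Icc, Set.mem_Icc] at hℓ ⊢
    omega
  · intro m _ hm
    rw [hc (m - j), zero_smul]
    contrapose! hm
    exact ⟨m - j, by simpa [abs_le] using hm, sub_add_cancel m j⟩
  · intro ℓ _
    rw [add_sub_cancel_right, AddChar.map_add_eq_mul, smul_mul_assoc]

theorem sum_Icc_pow_eq_sum_dirichletPowCoeff_smul (κ : ℕ) :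
    (∑ k ∈ Icc (-n : ℤ) n, ψ k) ^ κ
      = ∑ ℓ ∈ Icc (-(κ * n : ℤ)) (κ * n), dirichletPowCoeff n κ ℓ • ψ ℓ := by
  induction κ with
  | zero => simp [dirichletPowCoeff]
  | succ κ ih =>
    rw [pow_succ, ih, sum_Icc_smul_mul_sum_Icc n ψ fun _ => dirichletPowCoeff_eq_zero_of_lt n]
    push_cast
    rw [add_one_mul]
    rfl

end DirichletKernel

noncomputable def expChar : AddChar ℤ (ℝ → ℂ) where
  toFun ℓ x := exp (I * ℓ * x)
  map_zero_eq_one' := by ext; simp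
  map_add_eq_mul' a b := by ext; simp [← exp_add]; ring_nf

@[simp]
theorem expChar_apply (ℓ : ℤ) (x : ℝ) : expChar ℓ x = exp (I * ℓ * x) := rfl

theorem expChar_injective : Function.Injective expChar := by
  intro a b hab
  by_contra hne
  have hd : (a - b : ℂ) ≠ 0 := by exact_mod_cast sub_ne_zero.mpr hne
  set x : ℝ := Real.pi / (a - b)
  -- at `x` the two characters differ by the factor `exp (π I) = -1`
  have hx : I * a * x = I * b * x + Real.pi * I := by
    simp only [x]
    push_cast
    field_simp
    ring
  have h := congrFun hab x
  rw [expChar_apply, expChar_apply, hx, exp_add, exp_pi_mul_I, mul_neg_one] at h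
  exact exp_ne_zero _ (CharZero.neg_eq_self_iff.mp h)

theorem linearIndependent_expChar : LinearIndependent ℂ ⇑expChar := by
  let χ : ℤ → Multiplicative ℝ →* ℂ := fun ℓ =>
    { toFun x := expChar ℓ x.toAdd
      map_one' := by simp
      map_mul' x y := by simp [mul_add, exp_add] }
  have hχ : Function.Injective χ := fun a b h =>
    expChar_injective (funext fun x => DFunLike.congr_fun h (Multiplicative.ofAdd x))
  exact (linearIndependent_monoidHom (Multiplicative ℝ) ℂ).comp χ hχ

theorem dirichlet_kernel_pow_coeffs_general (κ n : ℕ) (B : ℤ → ℝ)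
    (hB : ∀ x : ℝ,
      (∑ k ∈ Finset.Icc (-(n : ℤ)) (n : ℤ), Complex.exp (Complex.I * k * x)) ^ κ
        = ∑ ℓ ∈ Finset.Icc (-(κ * n : ℤ)) (κ * n : ℤ),
            (B ℓ : ℂ) * Complex.exp (Complex.I * ℓ * x)) :
    ∀ ℓ₁ ℓ₂ : ℤ, |ℓ₁| ≤ |ℓ₂| → |ℓ₂| ≤ (κ * n : ℤ) → 0 ≤ B ℓ₂ ∧ B ℓ₂ ≤ B ℓ₁ := by
  have hB' : ∑ ℓ ∈ Icc (-(κ * n : ℤ)) (κ * n), (B ℓ : ℂ) • expChar ℓ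
      = ∑ ℓ ∈ Icc (-(κ * n : ℤ)) (κ * n), (dirichletPowCoeff n κ ℓ : ℂ) • expChar ℓ := by
    simp_rw [Nat.cast_smul_eq_nsmul, ← sum_Icc_pow_eq_sum_dirichletPowCoeff_smul]
    ext x
    simp [hB x]
  have hcoeff : ∀ ℓ : ℤ, |ℓ| ≤ κ * n → B ℓ = dirichletPowCoeff n κ ℓ := fun ℓ hℓ =>
    mod_cast linearIndependent_iff'ₛ.mp linearIndependent_expChar _ _ _ hB' ℓ
      (mem_Icc.mpr (abs_le.mp hℓ))
  intro ℓ₁ ℓ₂ h₁₂ h₂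
  rw [hcoeff ℓ₂ h₂, hcoeff ℓ₁ (h₁₂.trans h₂)]
  exact ⟨Nat.cast_nonneg _, mod_cast isSymmUnimodal_dirichletPowCoeff n κ h₁₂⟩

/-- If `(∑_{k=-n}^n e^{ikx})^κ = ∑_{ℓ=-κn}^{κn} B_ℓ e^{iℓx}`, then the coefficients `B_ℓ`
are nonnegative reals and `B_{ℓ₁} ≥ B_{ℓ₂} ≥ 0` whenever `|ℓ₁| ≤ |ℓ₂| ≤ κn`. -/
theorem dirichlet_kernel_pow_coeffs (κ n : ℕ) (hκ : 2 ≤ κ) (hn : 0 < n) (B : ℤ → ℝ)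
    (hB : ∀ x : ℝ,
      (∑ k ∈ Finset.Icc (-(n : ℤ)) (n : ℤ), Complex.exp (Complex.I * k * x)) ^ κ
        = ∑ ℓ ∈ Finset.Icc (-(κ * n : ℤ)) (κ * n : ℤ),
            (B ℓ : ℂ) * Complex.exp (Complex.I * ℓ * x)) :
    ∀ ℓ₁ ℓ₂ : ℤ, |ℓ₁| ≤ |ℓ₂| → |ℓ₂| ≤ (κ * n : ℤ) → 0 ≤ B ℓ₂ ∧ B ℓ₂ ≤ B ℓ₁ :=
  dirichlet_kernel_pow_coeffs_general κ n B hB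
end

section
/- Let m₁, m₂ be squarefree positive integers with d = gcd(m₁, m₂), let d₁ be a divisor of d, and set n = m₁m₂d₁/d². For any integer ℓ with 1 ≤ ℓ < n and gcd(ℓ, n) = 1, the number of pairs (ℓ₁, ℓ₂) with 1 ≤ ℓ_h ≤ m_h, gcd(ℓ_h, m_h) = 1 (h = 1, 2) such that ℓ₁/m₁ - ℓ₂/m₂ equals ℓ/n or ℓ/n - 1, is exactly φ(d) · ∏_{p | d₁} (p-2)/(p-1). -/
/-!
Write `m₁ = d a`, `m₂ = d b` and `d = d₁ e`; squarefreeness makes `a, b, d₁, e` pairwise coprime,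
and `n = a b d₁`. Then `ℓ₁/m₁ - ℓ₂/m₂ - ℓ/n = (ℓ₁ b - ℓ₂ a - ℓ e) / (d a b)` lies in `(-2, 1)`,
so the condition on `(ℓ₁, ℓ₂)` says exactly that `d a b ∣ ℓ₁ b - ℓ₂ a - ℓ e`. By the Chinese
remainder theorem this fixes `ℓ₁ mod a` and `ℓ₂ mod b`, and modulo `d` it leaves the pairs of units
`(x, y)` with `x b - y a = ℓ e`, i.e. the units `z = x b` for which `z - ℓ e` is a unit too. Their
number is multiplicative in `d`, with local factor `p - 1` at `p ∣ e` (where `ℓ e ≡ 0`) and `p - 2`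
at `p ∣ d₁`.
-/

open Finset

section UnitEquations

variable {R : Type*}

lemma natCard_isUnit_mul_eq [Monoid R] {u v : R} (hu : IsUnit u) (hv : IsUnit v) :
    Nat.card {x : R // IsUnit x ∧ x * u = v} = 1 := by
  refine Nat.card_eq_one_iff_exists.mpr ⟨⟨v * ↑hu.unit⁻¹, hv.mul hu.unit⁻¹.isUnit,
    by rw [mul_assoc, hu.val_inv_mul, mul_one]⟩, ?_⟩
  rintro ⟨x, -, rfl⟩
  rw [Subtype.mk.injEq, mul_assoc, hu.mul_val_inv, mul_one]

noncomputable def isUnitPairsEquiv [CommRing R] {a b : R} (ha : IsUnit a) (hb : IsUnit b)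
    (w : R) :
    {p : R × R // IsUnit p.1 ∧ IsUnit p.2 ∧ p.1 * b - p.2 * a = w} ≃
      {z : R // IsUnit z ∧ IsUnit (z - w)} where
  toFun p := ⟨p.1.1 * b, p.2.1.mul hb, by
    rw [show p.1.1 * b - w = p.1.2 * a by linear_combination p.2.2.2]; exact p.2.2.1.mul ha⟩
  invFun z := ⟨(z.1 * ↑hb.unit⁻¹, (z.1 - w) * ↑ha.unit⁻¹), z.2.1.mul hb.unit⁻¹.isUnit,
    z.2.2.mul ha.unit⁻¹.isUnit, by simp [mul_assoc]⟩
  left_inv p := by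
    obtain ⟨⟨x, y⟩, -, -, rfl⟩ := p
    ext <;> simp [mul_assoc]
  right_inv z := by ext; simp [mul_assoc]

end UnitEquations

lemma natCard_isUnit_and_isUnit_sub_mul {u v : ℕ} (h : u.Coprime v) (w : ℕ) :
    Nat.card {z : ZMod (u * v) // IsUnit z ∧ IsUnit (z - w)} =
      Nat.card {z : ZMod u // IsUnit z ∧ IsUnit (z - w)} *
        Nat.card {z : ZMod v // IsUnit z ∧ IsUnit (z - w)} := by
  rw [← Nat.card_prod, ← Nat.card_congr Equiv.subtypeProdEquivProd]
  refine Nat.card_congr (Equiv.subtypeEquiv (ZMod.chineseRemainder h).toEquiv fun z => ?_)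
  simp only [RingEquiv.toEquiv_eq_coe, EquivLike.coe_coe]
  rw [← isUnit_map_iff (ZMod.chineseRemainder h),
    ← isUnit_map_iff (ZMod.chineseRemainder h) (z - w), map_sub, map_natCast, Prod.isUnit_iff,
    Prod.isUnit_iff]
  simp [and_and_and_comm]

lemma natCard_isUnit_and_isUnit_sub_prime {p : ℕ} (hp : p.Prime) (w : ℕ) :
    Nat.card {z : ZMod p // IsUnit z ∧ IsUnit (z - w)} = if p ∣ w then p - 1 else p - 2 := by
  have := Fact.mk hp
  classical
  have hfilter :
      (univ.filter fun z : ZMod p => IsUnit z ∧ IsUnit (z - w)) = univ \ {0, (w : ZMod p)} := by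
    ext z
    simp [isUnit_iff_ne_zero, sub_ne_zero]
  rw [Nat.card_eq_fintype_card, Fintype.card_subtype, hfilter,
    card_sdiff_of_subset (subset_univ _), card_univ, ZMod.card]
  simp only [← ZMod.natCast_eq_zero_iff]
  split_ifs with hw
  · simp [hw]
  · rw [card_pair (Ne.symm hw)]

lemma natCard_isUnit_and_isUnit_sub_of_squarefree {k : ℕ} (hk : Squarefree k) (w : ℕ) :
    Nat.card {z : ZMod k // IsUnit z ∧ IsUnit (z - w)} =
      ∏ p ∈ k.primeFactors, if p ∣ w then p - 1 else p - 2 := by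
  rw [Nat.multiplicative_factorization
      (fun k => Nat.card {z : ZMod k // IsUnit z ∧ IsUnit (z - w)})
      (fun u v h => natCard_isUnit_and_isUnit_sub_mul h w) ?_ hk.ne_zero,
    Finsupp.prod, Nat.support_factorization]
  · refine prod_congr rfl fun p hp => ?_
    have hp' := Nat.prime_of_mem_primeFactors hp
    rw [Nat.factorization_eq_one_of_squarefree hk hp' (Nat.dvd_of_mem_primeFactors hp), pow_one,
      natCard_isUnit_and_isUnit_sub_prime hp']
  · exact Nat.card_eq_one_iff_exists.mpr
      ⟨⟨0, isUnit_of_subsingleton _, isUnit_of_subsingleton _⟩, fun _ => Subsingleton.elim _ _⟩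

lemma ZMod.bijOn_natCast_Icc (m : ℕ) [NeZero m] :
    Set.BijOn (Nat.cast : ℕ → ZMod m) (Set.Icc 1 m) Set.univ := by
  refine ⟨Set.mapsTo_univ _ _, fun x hx y hy hxy => ?_, fun z _ => ?_⟩
  · have h : ((x - 1 : ℕ) : ZMod m) = ((y - 1 : ℕ) : ZMod m) := by
      rw [Nat.cast_sub hx.1, Nat.cast_sub hy.1, hxy]
    have := congrArg ZMod.val h
    rw [ZMod.val_natCast, ZMod.val_natCast, Nat.mod_eq_of_lt (by grind),
      Nat.mod_eq_of_lt (by grind)] at this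
    grind
  · refine ⟨(z - 1).val + 1, ⟨by omega, Nat.succ_le_of_lt (ZMod.val_lt _)⟩, ?_⟩
    simp

lemma ZMod.bijOn_natCast_prod_Icc {u v : ℕ} [NeZero u] [NeZero v] (h : u.Coprime v) :
    Set.BijOn (fun ℓ : ℕ => ((ℓ : ZMod u), (ℓ : ZMod v))) (Set.Icc 1 (u * v)) Set.univ := by
  have := (ZMod.chineseRemainder h).bijective.bijOn_univ.comp (ZMod.bijOn_natCast_Icc (u * v))
  convert this using 1
  ext ℓ <;> simp

lemma Finset.card_filter_eq_natCard_of_bijOn {α β : Type*} [Fintype β] {f : α → β}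
    {s : Finset α} (hf : Set.BijOn f s Set.univ) {Q : α → Prop} [DecidablePred Q] {P : β → Prop}
    (hQP : ∀ x ∈ s, Q x ↔ P (f x)) :
    (s.filter Q).card = Nat.card {y // P y} := by
  classical
  rw [Nat.card_eq_fintype_card, Fintype.card_subtype]
  refine card_nbij f (fun x hx => ?_) (hf.injOn.mono fun x hx => (mem_filter.mp hx).1)
    fun y hy => ?_
  · obtain ⟨hxs, hQ⟩ := mem_filter.mp hx
    exact mem_filter.mpr ⟨mem_univ _, (hQP x hxs).mp hQ⟩
  · obtain ⟨x, hx, rfl⟩ := hf.surjOn (Set.mem_univ y)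
    exact ⟨x, mem_filter.mpr ⟨hx, (hQP x hx).mpr (mem_filter.mp hy).2⟩, rfl⟩

lemma Int.natCast_mul_dvd_iff {u v : ℕ} (h : u.Coprime v) {k : ℤ} :
    ((u * v : ℕ) : ℤ) ∣ k ↔ (u : ℤ) ∣ k ∧ (v : ℤ) ∣ k := by
  push_cast
  exact ⟨fun hk => ⟨(dvd_mul_right _ _).trans hk, (dvd_mul_left _ _).trans hk⟩,
    fun ⟨hu, hv⟩ => (Nat.isCoprime_iff_coprime.mpr h).mul_dvd hu hv⟩

section CoprimePairs

variable {a b d w : ℕ}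

lemma coprime_pair_dvd_iff (hda : d.Coprime a) (hdb : d.Coprime b) (hab : a.Coprime b)
    (x y : ℕ) :
    (x.Coprime (d * a) ∧ y.Coprime (d * b) ∧ ((d * a * b : ℕ) : ℤ) ∣ x * b - y * a - w) ↔
      (IsUnit (x : ZMod d) ∧ IsUnit (y : ZMod d) ∧ (x : ZMod d) * b - (y : ZMod d) * a = w) ∧
        (IsUnit (x : ZMod a) ∧ (x : ZMod a) * b = w) ∧
          (IsUnit (y : ZMod b) ∧ (y : ZMod b) * a = -w) := by
  rw [Int.natCast_mul_dvd_iff (hdb.mul_left hab), Int.natCast_mul_dvd_iff hda,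
    Nat.coprime_mul_iff_right, Nat.coprime_mul_iff_right]
  simp only [← ZMod.isUnit_iff_coprime, ← ZMod.intCast_zmod_eq_zero_iff_dvd]
  push_cast
  simp only [ZMod.natCast_self, mul_zero, sub_zero, zero_sub, sub_eq_zero, neg_eq_iff_eq_neg]
  tauto

theorem card_coprime_pairs_dvd [NeZero a] [NeZero b] [NeZero d] (hda : d.Coprime a)
    (hdb : d.Coprime b) (hab : a.Coprime b) (hwa : w.Coprime a) (hwb : w.Coprime b) :
    ((Icc 1 (d * a) ×ˢ Icc 1 (d * b)).filter fun ℓ : ℕ × ℕ => ℓ.1.Coprime (d * a) ∧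
      ℓ.2.Coprime (d * b) ∧ ((d * a * b : ℕ) : ℤ) ∣ ℓ.1 * b - ℓ.2 * a - w).card =
      Nat.card {z : ZMod d // IsUnit z ∧ IsUnit (z - w)} := by
  have hF : Set.BijOn (fun ℓ : ℕ × ℕ => (((ℓ.1 : ZMod d), (ℓ.2 : ZMod d)),
      ((ℓ.1 : ZMod a), (ℓ.2 : ZMod b)))) ↑(Icc 1 (d * a) ×ˢ Icc 1 (d * b)) Set.univ := by
    have h := (ZMod.bijOn_natCast_prod_Icc hda).prodMap (ZMod.bijOn_natCast_prod_Icc hdb)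
    rw [Set.univ_prod_univ] at h
    rw [coe_product, coe_Icc, coe_Icc]
    exact (Equiv.prodProdProdComm _ _ _ _).bijective.bijOn_univ.comp h
  have unit {u v : ℕ} (h : u.Coprime v) : IsUnit (u : ZMod v) :=
    (ZMod.isUnit_iff_coprime u v).mpr h
  let P₁ (x : ZMod d × ZMod d) : Prop := IsUnit x.1 ∧ IsUnit x.2 ∧ x.1 * b - x.2 * a = w
  let P₂ (x : ZMod a) : Prop := IsUnit x ∧ x * b = w
  let P₃ (y : ZMod b) : Prop := IsUnit y ∧ y * a = -w
  calc _ = Nat.card {y : (ZMod d × ZMod d) × (ZMod a × ZMod b) // P₁ y.1 ∧ P₂ y.2.1 ∧ P₃ y.2.2} :=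
        card_filter_eq_natCard_of_bijOn hF fun ℓ _ => coprime_pair_dvd_iff hda hdb hab ℓ.1 ℓ.2
    _ = Nat.card {x // P₁ x} * (Nat.card {x // P₂ x} * Nat.card {y // P₃ y}) := by
      rw [Nat.card_congr (Equiv.subtypeProdEquivProd (p := P₁)
          (q := fun y : ZMod a × ZMod b => P₂ y.1 ∧ P₃ y.2)), Nat.card_prod,
        Nat.card_congr (Equiv.subtypeProdEquivProd (p := P₂) (q := P₃)), Nat.card_prod]
    _ = _ := by
      rw [natCard_isUnit_mul_eq (unit hab.symm) (unit hwa),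
        natCard_isUnit_mul_eq (unit hab) (unit hwb).neg,
        Nat.card_congr (isUnitPairsEquiv (unit hda.symm) (unit hdb.symm) _), mul_one, mul_one]

end CoprimePairs

lemma Int.dvd_iff_eq_zero_or_eq_neg {N K : ℤ} (h₁ : -(2 * N) < K) (h₂ : K < N) :
    N ∣ K ↔ K = 0 ∨ K = -N := by
  constructor
  · rintro ⟨k, rfl⟩
    have hN : 0 < N := by linarith
    have : -2 < k := by nlinarith
    have : k < 1 := by nlinarith
    interval_cases k <;> simp
  · rintro (rfl | rfl) <;> simp

lemma div_sub_div_eq_or_eq_sub_one_iff_dvd {a b d₁ e ℓ x y : ℕ} (ha : a ≠ 0) (hb : b ≠ 0)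
    (hd₁ : d₁ ≠ 0) (he : e ≠ 0) (hx : x ≤ d₁ * e * a) (hy₁ : 1 ≤ y) (hy : y ≤ d₁ * e * b)
    (hℓ : ℓ < a * b * d₁) :
    ((x : ℚ) / ((d₁ * e * a : ℕ) : ℚ) - (y : ℚ) / ((d₁ * e * b : ℕ) : ℚ) =
        (ℓ : ℚ) / ((a * b * d₁ : ℕ) : ℚ) ∨
      (x : ℚ) / ((d₁ * e * a : ℕ) : ℚ) - (y : ℚ) / ((d₁ * e * b : ℕ) : ℚ) =
        (ℓ : ℚ) / ((a * b * d₁ : ℕ) : ℚ) - 1) ↔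
      ((d₁ * e * a * b : ℕ) : ℤ) ∣ x * b - y * a - ((ℓ * e : ℕ) : ℤ) := by
  have hxb : x * b ≤ d₁ * e * a * b := Nat.mul_le_mul_right b hx
  have hya : y * a ≤ d₁ * e * a * b := by
    rw [show d₁ * e * a * b = d₁ * e * b * a by ring]
    exact Nat.mul_le_mul_right a hy
  have hya₁ : 1 ≤ y * a := Nat.one_le_iff_ne_zero.mpr (mul_ne_zero (by omega) ha)
  have hℓe : ℓ * e < d₁ * e * a * b := by
    rw [show d₁ * e * a * b = a * b * d₁ * e by ring]
    exact Nat.mul_lt_mul_of_pos_right hℓ (Nat.pos_of_ne_zero he)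
  have hN : (0 : ℚ) < ((d₁ * e * a * b : ℕ) : ℚ) := by positivity
  have hK : (x : ℚ) / ((d₁ * e * a : ℕ) : ℚ) - (y : ℚ) / ((d₁ * e * b : ℕ) : ℚ) =
      (ℓ : ℚ) / ((a * b * d₁ : ℕ) : ℚ) +
        (((x * b - y * a - ((ℓ * e : ℕ) : ℤ) : ℤ) : ℚ) / ((d₁ * e * a * b : ℕ) : ℚ)) := by
    push_cast
    field_simp
    ring
  have hxb₀ := Nat.zero_le (x * b)
  have hℓe₀ := Nat.zero_le (ℓ * e)
  zify at hxb₀ hxb hya hya₁ hℓe₀ hℓe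
  rw [hK, Int.dvd_iff_eq_zero_or_eq_neg (by push_cast; linarith) (by push_cast; linarith)]
  generalize (x * b - y * a - ((ℓ * e : ℕ) : ℤ) : ℤ) = K
  rw [sub_eq_add_neg, add_right_inj, add_eq_left, div_eq_zero_iff, div_eq_iff hN.ne', neg_one_mul]
  simp only [hN.ne', or_false]
  norm_cast

lemma Nat.totient_eq_prod_sub_one_of_squarefree {n : ℕ} (hn : Squarefree n) :
    n.totient = ∏ p ∈ n.primeFactors, (p - 1) := by
  rw [Nat.totient_eq_div_primeFactors_mul, Nat.prod_primeFactors_of_squarefree hn,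
    Nat.div_self (Nat.pos_of_ne_zero hn.ne_zero), one_mul]

lemma Nat.cast_prod_primeFactors_sub {R : Type*} [CommRing R] {n k : ℕ} (hk : k ≤ 2) :
    ((∏ p ∈ n.primeFactors, (p - k) : ℕ) : R) = ∏ p ∈ n.primeFactors, ((p : R) - k) := by
  push_cast
  refine prod_congr rfl fun p hp => ?_
  rw [Nat.cast_sub (hk.trans (Nat.prime_of_mem_primeFactors hp).two_le)]

lemma prod_primeFactors_ite_dvd {d₁ e w : ℕ} (hsq : Squarefree (d₁ * e)) (hwd₁ : w.Coprime d₁)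
    (hew : e ∣ w) :
    ((∏ p ∈ (d₁ * e).primeFactors, if p ∣ w then p - 1 else p - 2 : ℕ) : ℚ) =
      (d₁ * e).totient * ∏ p ∈ d₁.primeFactors, ((p : ℚ) - 2) / ((p : ℚ) - 1) := by
  obtain ⟨hcop, hsq₁, hsqe⟩ := Nat.squarefree_mul_iff.mp hsq
  have h₁ : ∀ p ∈ d₁.primeFactors, ¬ p ∣ w := fun p hp hpw =>
    (Nat.prime_of_mem_primeFactors hp).not_dvd_one
      (hwd₁ ▸ Nat.dvd_gcd hpw (Nat.dvd_of_mem_primeFactors hp))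
  have hₑ : ∀ p ∈ e.primeFactors, p ∣ w := fun p hp => (Nat.dvd_of_mem_primeFactors hp).trans hew
  rw [Nat.Coprime.primeFactors_mul hcop, prod_union hcop.disjoint_primeFactors,
    prod_congr rfl fun p hp => if_neg (h₁ p hp), prod_congr rfl fun p hp => if_pos (hₑ p hp),
    Nat.totient_mul hcop, Nat.totient_eq_prod_sub_one_of_squarefree hsq₁,
    Nat.totient_eq_prod_sub_one_of_squarefree hsqe, Nat.cast_mul, Nat.cast_mul,
    Nat.cast_prod_primeFactors_sub (by norm_num), Nat.cast_prod_primeFactors_sub (by norm_num),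
    Nat.cast_prod_primeFactors_sub (by norm_num), mul_right_comm, ← prod_mul_distrib]
  congr 1
  refine prod_congr rfl fun p hp => ?_
  have : (p : ℚ) - 1 ≠ 0 := by
    have := (Nat.prime_of_mem_primeFactors hp).one_lt
    rw [sub_ne_zero]; exact_mod_cast this.ne'
  push_cast
  field_simp

theorem count_pairs_reduced_fractions_general (m₁ m₂ : ℕ)
    (hs₁ : Squarefree m₁) (hs₂ : Squarefree m₂)
    (d₁ : ℕ) (hd₁ : d₁ ∣ Nat.gcd m₁ m₂)
    (n : ℕ) (hn : n * (Nat.gcd m₁ m₂) ^ 2 = m₁ * m₂ * d₁)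
    (ℓ : ℕ) (hℓn : ℓ < n) (hℓcop : Nat.gcd ℓ n = 1) :
    (((Finset.Icc 1 m₁ ×ˢ Finset.Icc 1 m₂).filter (fun p =>
        Nat.gcd p.1 m₁ = 1 ∧ Nat.gcd p.2 m₂ = 1 ∧
          ((p.1 : ℚ) / m₁ - (p.2 : ℚ) / m₂ = (ℓ : ℚ) / n ∨
            (p.1 : ℚ) / m₁ - (p.2 : ℚ) / m₂ = (ℓ : ℚ) / n - 1))).card : ℚ)
      = (Nat.totient (Nat.gcd m₁ m₂) : ℚ) *
          ∏ p ∈ d₁.primeFactors, (((p : ℚ) - 2) / ((p : ℚ) - 1)) := by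
  obtain ⟨d, hd⟩ : ∃ d, Nat.gcd m₁ m₂ = d := ⟨_, rfl⟩
  obtain ⟨a, rfl⟩ : d ∣ m₁ := hd ▸ Nat.gcd_dvd_left _ _
  obtain ⟨b, rfl⟩ : d ∣ m₂ := hd ▸ Nat.gcd_dvd_right _ _
  rw [hd] at hd₁ hn ⊢
  obtain ⟨hda, hsq, -⟩ := Nat.squarefree_mul_iff.mp hs₁
  obtain ⟨hdb, -, -⟩ := Nat.squarefree_mul_iff.mp hs₂
  have hab : a.Coprime b := by rwa [Nat.gcd_mul_left, mul_eq_left₀ hsq.ne_zero] at hd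
  obtain ⟨e, rfl⟩ := hd₁
  obtain ⟨hd₁0, he0⟩ := mul_ne_zero_iff.mp hsq.ne_zero
  have ha0 := right_ne_zero_of_mul hs₁.ne_zero
  have hb0 := right_ne_zero_of_mul hs₂.ne_zero
  have := NeZero.mk hsq.ne_zero
  have := NeZero.mk ha0
  have := NeZero.mk hb0
  obtain rfl : n = a * b * d₁ :=
    Nat.eq_of_mul_eq_mul_right (Nat.pos_of_ne_zero (pow_ne_zero 2 hsq.ne_zero)) (by rw [hn]; ring)
  have coprime_ℓe {k : ℕ} (hk : k ∣ a * b * d₁) (hek : e.Coprime k) : (ℓ * e).Coprime k :=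
    (Nat.Coprime.coprime_dvd_right hk hℓcop).mul_left hek
  rw [filter_congr fun x hx => and_congr_right' <| and_congr_right' <|
      have ⟨hx₁, hx₂⟩ := mem_product.mp hx
      div_sub_div_eq_or_eq_sub_one_iff_dvd ha0 hb0 hd₁0 he0 (mem_Icc.mp hx₁).2 (mem_Icc.mp hx₂).1
        (mem_Icc.mp hx₂).2 hℓn,
    card_coprime_pairs_dvd hda hdb hab
      (coprime_ℓe ⟨b * d₁, by ring⟩ (hda.coprime_dvd_left (dvd_mul_left _ _)))
      (coprime_ℓe ⟨a * d₁, by ring⟩ (hdb.coprime_dvd_left (dvd_mul_left _ _))),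
    natCard_isUnit_and_isUnit_sub_of_squarefree hsq,
    prod_primeFactors_ite_dvd hsq
      (coprime_ℓe (dvd_mul_left _ _) (Nat.coprime_of_squarefree_mul hsq).symm) (dvd_mul_left _ _)]

/-- Counting lemma for differences of reduced fractions: with `m₁, m₂` squarefree,
`d = gcd(m₁,m₂)`, `d₁ ∣ d`, `n = m₁m₂d₁/d²`, and `ℓ/n` a reduced fraction with
`1 ≤ ℓ < n`, the number of pairs `(ℓ₁, ℓ₂)` with `1 ≤ ℓ_h ≤ m_h`, `gcd(ℓ_h, m_h) = 1`
and `ℓ₁/m₁ - ℓ₂/m₂ = ℓ/n` or `ℓ/n - 1` equals `φ(d) ∏_{p ∣ d₁} (p-2)/(p-1)`. -/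
theorem count_pairs_reduced_fractions (m₁ m₂ : ℕ) (h₁ : 0 < m₁) (h₂ : 0 < m₂)
    (hs₁ : Squarefree m₁) (hs₂ : Squarefree m₂)
    (d₁ : ℕ) (hd₁ : d₁ ∣ Nat.gcd m₁ m₂)
    (n : ℕ) (hn : n * (Nat.gcd m₁ m₂) ^ 2 = m₁ * m₂ * d₁)
    (ℓ : ℕ) (hℓ1 : 1 ≤ ℓ) (hℓn : ℓ < n) (hℓcop : Nat.gcd ℓ n = 1) :
    (((Finset.Icc 1 m₁ ×ˢ Finset.Icc 1 m₂).filter (fun p =>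
        Nat.gcd p.1 m₁ = 1 ∧ Nat.gcd p.2 m₂ = 1 ∧
          ((p.1 : ℚ) / m₁ - (p.2 : ℚ) / m₂ = (ℓ : ℚ) / n ∨
            (p.1 : ℚ) / m₁ - (p.2 : ℚ) / m₂ = (ℓ : ℚ) / n - 1))).card : ℚ)
      = (Nat.totient (Nat.gcd m₁ m₂) : ℚ) *
          ∏ p ∈ d₁.primeFactors, (((p : ℚ) - 2) / ((p : ℚ) - 1)) :=
  count_pairs_reduced_fractions_general m₁ m₂ hs₁ hs₂ d₁ hd₁ n hn ℓ hℓn hℓcop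
end

section
/- For n a positive integer, 1 ≤ s ≤ n/2 an integer, and N a positive integer, |sin((2N+1)πs/n) / ((2N+1) sin(πs/n))| ≤ min{1, n/(sN)}. -/
/-!
The ratio `sin (m x) / (m sin x)` is at most `1` in absolute value because `|sin (m x)| ≤ m |sin x|`
(induction on `m` via the addition formula). On `(0, π/2]` Jordan's inequality `sin x ≥ 2x/π`
together with `|sin (m x)| ≤ 1` bounds it by `π / (2 m x)`, which at `x = πs/n`, `m = 2N+1`
is `n / (2(2N+1)s) ≤ n / (sN)`.
-/

open Real

lemma abs_sin_nat_mul_le (m : ℕ) (x : ℝ) : |sin (m * x)| ≤ m * |sin x| := by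
  induction m with
  | zero => simp
  | succ k ih =>
    have hsin_add : |sin (k * x + x)| ≤ |sin (k * x)| + |sin x| := by
      rw [sin_add]
      refine (abs_add_le _ _).trans (add_le_add ?_ ?_) <;> rw [abs_mul]
      · exact mul_le_of_le_one_right (abs_nonneg _) (abs_cos_le_one _)
      · exact mul_le_of_le_one_left (abs_nonneg _) (abs_cos_le_one _)
    push_cast
    rw [add_mul, one_mul]
    linarith

lemma abs_sin_nat_mul_div_le_one (m : ℕ) (x : ℝ) : |sin (m * x) / (m * sin x)| ≤ 1 := by
  rw [abs_div, abs_mul, Nat.abs_cast]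
  exact div_le_one_of_le₀ (abs_sin_nat_mul_le m x) (by positivity)

lemma abs_sin_mul_div_le_pi_div {m x : ℝ} (hm : 0 < m) (hx : 0 < x) (hx' : x ≤ π / 2) :
    |sin (m * x) / (m * sin x)| ≤ π / (2 * m * x) := by
  have hjordan : 2 / π * x ≤ sin x := mul_le_sin hx.le hx'
  have hden : 0 < m * (2 / π * x) := by positivity
  calc |sin (m * x) / (m * sin x)|
      = |sin (m * x)| / (m * sin x) := by
        rw [abs_div, abs_of_pos (a := m * sin x) (hden.trans_le (by gcongr))]
    _ ≤ 1 / (m * (2 / π * x)) := by gcongr; exact abs_sin_le_one _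
    _ = π / (2 * m * x) := by field_simp

theorem fejer_kernel_tail_bound_general (n s N : ℕ) (hs : 0 < s) (hN : 0 < N)
    (h : 2 * s ≤ n) :
    |Real.sin ((2 * N + 1) * Real.pi * s / n) / ((2 * N + 1) * Real.sin (Real.pi * s / n))|
      ≤ min 1 ((n : ℝ) / (s * N)) := by
  have hn : (0 : ℝ) < n := by exact_mod_cast (show 0 < n by omega)
  have hsR : (0 : ℝ) < s := by exact_mod_cast hs
  have hNR : (0 : ℝ) < N := by exact_mod_cast hN
  have hx : 0 < π * s / n := by positivity
  have hx' : π * s / n ≤ π / 2 := by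
    rw [div_le_div_iff₀ hn two_pos]
    have : (2 * s : ℝ) ≤ n := by exact_mod_cast h
    nlinarith [pi_pos]
  have hodd : (2 * N + 1 : ℝ) = (2 * N + 1 : ℕ) := by push_cast; ring
  rw [mul_assoc _ π, mul_div_assoc, hodd]
  refine le_min (abs_sin_nat_mul_div_le_one _ _)
    ((abs_sin_mul_div_le_pi_div (by positivity) hx hx').trans ?_)
  calc π / (2 * ((2 * N + 1 : ℕ) : ℝ) * (π * s / n)) = n / (2 * (2 * N + 1) * s) := by
        push_cast; field_simp
    _ ≤ n / (s * N) := div_le_div_of_nonneg_left hn.le (by positivity) (by nlinarith)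

/-- For positive integers `n, s, N` with `s ≤ n/2`,
`|sin((2N+1)πs/n) / ((2N+1) sin(πs/n))| ≤ min {1, n/(sN)}`. -/
theorem fejer_kernel_tail_bound (n s N : ℕ) (hn : 0 < n) (hs : 0 < s) (hN : 0 < N)
    (h : 2 * s ≤ n) :
    |Real.sin ((2 * N + 1) * Real.pi * s / n) / ((2 * N + 1) * Real.sin (Real.pi * s / n))|
      ≤ min 1 ((n : ℝ) / (s * N)) :=
  fejer_kernel_tail_bound_general n s N hs hN h
end

section
/- Let Δ < 0 be a fundamental discriminant with class number h(Δ). For all N > |Δ|, the number of primes p ≤ N with χ_Δ(p) = 1 is at most 12 h(Δ) N / √|Δ|. -/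
/-- `Δ` is a fundamental discriminant: `Δ ≡ 1 (mod 4)` squarefree, or `Δ = 4m` with
`m ≡ 2, 3 (mod 4)` squarefree. -/
def IsFundamentalDiscriminant (Δ : ℤ) : Prop :=
  (Δ % 4 = 1 ∧ Squarefree Δ) ∨
    (Δ % 4 = 0 ∧ Squarefree (Δ / 4) ∧ (Δ / 4 % 4 = 2 ∨ Δ / 4 % 4 = 3))

/-- The set of reduced primitive (positive definite) binary quadratic forms `(a, b, c)`
of discriminant `Δ < 0`. -/
def reducedForms (Δ : ℤ) : Set (ℤ × ℤ × ℤ) :=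
  {f | 0 < f.1 ∧ 0 < f.2.2 ∧ f.2.1 ^ 2 - 4 * f.1 * f.2.2 = Δ ∧
    -f.1 < f.2.1 ∧ f.2.1 ≤ f.1 ∧ f.1 ≤ f.2.2 ∧ (f.1 = f.2.2 → 0 ≤ f.2.1) ∧
    Int.gcd (Int.gcd f.1 f.2.1) f.2.2 = 1}

/-- The class number `h(Δ)`: the number of reduced primitive forms of discriminant `Δ`. -/
noncomputable def classNumber (Δ : ℤ) : ℕ := (reducedForms Δ).ncard

/-
If `χ(p) = 1` for an odd prime `p`, then `Δ` is a square mod `p`: since `χ` is real it takes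
values in `{0, ±1}` and can be reduced mod `p`, and for the Gauss sum `g` of the reduced
character in a cyclotomic extension of `𝔽_p`, primitivity gives `g² = χ(-1)|Δ| = Δ`, while
Frobenius gives `g^p = χ(p) g = g`; hence `Δ^((p-1)/2) = 1`. Lifting a square root of `Δ` to
some `b` with `b² ≡ Δ (mod 4p)` yields a primitive form `(p, b, c)` of discriminant `Δ`
representing `p`, and reducing it yields a reduced form representing `p`.

A reduced form `(a, b, c)` satisfies `4cm = (2cy + bx)² + |Δ|x²` and `3ac ≤ |Δ|`, so a value
`m ≤ N` is attained at some `(x, y)` with `y ≥ 0` in a box with at most `11 N / √|Δ|` points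
when `|Δ| ≤ N`. Summing over the `h(Δ) ≥ 1` reduced forms and adding the prime `2` gives
`11 h(Δ) N / √|Δ| + 1 ≤ 12 h(Δ) N / √|Δ|`.
-/

namespace MulChar

lemma isQuadratic_of_forall_conj_eq {R : Type*} [CommRing R] [Finite Rˣ] {χ : MulChar R ℂ}
    (h : ∀ a, starRingEnd ℂ (χ a) = χ a) : χ.IsQuadratic := by
  have hstar : star χ = χ := ext fun a ↦ h a
  rw [isQuadratic_iff_sq_eq_one, sq]
  nth_rewrite 2 [← hstar]
  rw [star_eq_inv, mul_inv_cancel]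

variable {R : Type*} [CommMonoid R] {R' : Type*} [CommRing R'] {χ : MulChar R R'}

lemma IsQuadratic.intCast_invFun_apply (hχ : χ.IsQuadratic) (a : R) :
    ((Function.invFun ((↑) : ℤ → R') (χ a) : ℤ) : R') = χ a := by
  refine Function.invFun_eq ?_
  rcases hχ a with h | h | h
  exacts [⟨0, by simp [h]⟩, ⟨1, by simp [h]⟩, ⟨-1, by simp [h]⟩]

variable [CharZero R']

noncomputable def IsQuadratic.toIntChar (hχ : χ.IsQuadratic) : MulChar R ℤ where
  toFun a := Function.invFun ((↑) : ℤ → R') (χ a)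
  map_one' := Int.cast_injective (α := R') <| by
    rw [hχ.intCast_invFun_apply, map_one, Int.cast_one]
  map_mul' a b := Int.cast_injective (α := R') <| by
    rw [Int.cast_mul, hχ.intCast_invFun_apply, hχ.intCast_invFun_apply,
      hχ.intCast_invFun_apply, map_mul]
  map_nonunit' a ha := Int.cast_injective (α := R') <| by
    rw [hχ.intCast_invFun_apply, χ.map_nonunit ha, Int.cast_zero]

lemma IsQuadratic.intCast_toIntChar_apply (hχ : χ.IsQuadratic) (a : R) :
    (hχ.toIntChar a : R') = χ a :=
  hχ.intCast_invFun_apply a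

lemma IsQuadratic.isQuadratic_toIntChar (hχ : χ.IsQuadratic) : hχ.toIntChar.IsQuadratic := by
  intro a
  have := hχ a
  simp only [← hχ.intCast_toIntChar_apply] at this
  exact_mod_cast this

lemma IsQuadratic.toIntChar_ringHomComp (hχ : χ.IsQuadratic) :
    hχ.toIntChar.ringHomComp (Int.castRingHom R') = χ :=
  ext fun a ↦ hχ.intCast_toIntChar_apply a

end MulChar

namespace DirichletCharacter

section Conductor

variable {n : ℕ} [NeZero n] {R R' : Type*} [CommRing R] [CommRing R']

lemma conductor_eq_of_ker_eq {χ : DirichletCharacter R n} {χ' : DirichletCharacter R' n}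
    (h : χ.toUnitHom.ker = χ'.toUnitHom.ker) : χ.conductor = χ'.conductor := by
  have hset : χ.conductorSet = χ'.conductorSet := by
    ext d
    refine ⟨fun hd ↦ ?_, fun hd ↦ ?_⟩
    · rw [mem_conductorSet_iff, factorsThrough_iff_ker_unitsMap hd.dvd, ← h]
      exact (factorsThrough_iff_ker_unitsMap hd.dvd).mp hd
    · rw [mem_conductorSet_iff, factorsThrough_iff_ker_unitsMap hd.dvd, h]
      exact (factorsThrough_iff_ker_unitsMap hd.dvd).mp hd
  rw [conductor, conductor, hset]

lemma conductor_ringHomComp_intCast {χ : DirichletCharacter ℤ n} (hχ : χ.IsQuadratic)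
    [Nontrivial R] (hR : ringChar R ≠ 2) :
    conductor (χ.ringHomComp (Int.castRingHom R)) = χ.conductor := by
  refine conductor_eq_of_ker_eq (Subgroup.ext fun u ↦ ?_)
  simp only [MonoidHom.mem_ker, ← Units.val_inj, MulChar.coe_toUnitHom, Units.val_one,
    MulChar.ringHomComp_apply, eq_intCast]
  exact ⟨fun h ↦ Int.cast_injOn_of_ringChar_ne_two hR (hχ u) (by simp) (by simpa using h),
    fun h ↦ by simp [h]⟩

end Conductor

lemma natCast_ne_zero_of_apply_eq_one {R : Type*} [CommRing R] [Nontrivial R] {n : ℕ}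
    {χ : DirichletCharacter R n} {p : ℕ} (hp : p.Prime) (h : χ p = 1) : (n : ZMod p) ≠ 0 := by
  rw [Ne, ZMod.natCast_eq_zero_iff, ← ZMod.isUnit_prime_iff_not_dvd hp]
  exact (MulChar.apply_ne_zero_iff (χ := χ)).mp (by simp [h])

end DirichletCharacter

section GaussSum

variable {n : ℕ} [NeZero n] {K : Type*} [CommRing K] [IsDomain K]
  {χ : DirichletCharacter K n} {ψ : AddChar (ZMod n) K}

lemma gaussSum_mul_gaussSum_eq_card_of_isPrimitive (hχ : χ.IsPrimitive) (hψ : ψ.IsPrimitive) :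
    gaussSum χ ψ * gaussSum χ⁻¹ ψ⁻¹ = n := by
  classical
  have hshift (a : ZMod n) :
      gaussSum χ (ψ.mulShift a) * ψ (-a) = ∑ x, χ x * ψ (a * (x - 1)) := by
    rw [gaussSum, Finset.sum_mul]
    refine Finset.sum_congr rfl fun x _ ↦ ?_
    rw [AddChar.mulShift_apply, mul_assoc, ← AddChar.map_add_eq_mul]
    ring_nf
  calc gaussSum χ ψ * gaussSum χ⁻¹ ψ⁻¹
      = ∑ a, gaussSum χ (ψ.mulShift a) * ψ (-a) := by
        rw [show gaussSum χ⁻¹ ψ⁻¹ = ∑ a, χ⁻¹ a * ψ⁻¹ a from rfl, Finset.mul_sum]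
        refine Finset.sum_congr rfl fun a _ ↦ ?_
        rw [gaussSum_mulShift_of_isPrimitive ψ hχ, AddChar.inv_apply]
        ring
    _ = ∑ x, χ x * ∑ a, ψ (a * (x - 1)) := by
        simp only [hshift, Finset.mul_sum]
        exact Finset.sum_comm
    _ = n := by
        simp [AddChar.sum_mulShift _ hψ, sub_eq_zero]

lemma gaussSum_sq_of_isPrimitive (hχ : χ.IsPrimitive) (hq : χ.IsQuadratic)
    (hψ : ψ.IsPrimitive) : gaussSum χ ψ ^ 2 = χ (-1) * n := by
  have hinv : χ (-1) * gaussSum χ ψ⁻¹ = gaussSum χ ψ := by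
    rw [ψ.inv_mulShift, ← Units.coe_neg_one]
    exact gaussSum_mulShift χ ψ (-1)
  rw [← gaussSum_mul_gaussSum_eq_card_of_isPrimitive hχ hψ, hq.inv, ← hinv]
  ring_nf

end GaussSum

namespace DirichletCharacter

variable {n : ℕ} [NeZero n] {p : ℕ} [Fact p.Prime]

theorem isSquare_neg_natCast {χ : DirichletCharacter ℤ n} (hq : χ.IsQuadratic)
    (hprim : χ.IsPrimitive) (hodd : χ.Odd) (hp2 : p ≠ 2) (hχp : χ p = 1) :
    IsSquare (-(n : ZMod p)) := by
  have hunit : IsUnit (p : ZMod n) := (MulChar.apply_ne_zero_iff (χ := χ)).mp (by simp [hχp])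
  have hn : (n : ZMod p) ≠ 0 := natCast_ne_zero_of_apply_eq_one Fact.out hχp
  let ψ := AddChar.primitiveZModChar ⟨n, Nat.pos_of_neZero n⟩ (ZMod p) hn
  let K := CyclotomicField ψ.n (ZMod p)
  have : CharP K p := charP_of_injective_algebraMap (algebraMap (ZMod p) K).injective p
  have hK : ringChar K ≠ 2 := by rwa [ringChar.eq K p]
  let χK : DirichletCharacter K n := χ.ringHomComp (Int.castRingHom K)
  have hqK : χK.IsQuadratic := hq.comp _
  have hprimK : χK.IsPrimitive := (conductor_ringHomComp_intCast hq hK).trans hprim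
  have hgauss := gaussSum_sq_of_isPrimitive hprimK hqK ψ.prim
  have key := Char.card_pow_char_pow hqK ψ.char p 1 hunit hp2 (by rwa [ZMod.card])
  simp only [χK, MulChar.ringHomComp_apply, show χ (-1) = -1 from hodd, hχp, pow_one,
    ZMod.card, map_neg, map_one, neg_one_mul] at key
  have : (-(n : ZMod p)) ^ (p / 2) = 1 :=
    (algebraMap (ZMod p) K).injective (by simpa using key)
  rwa [FiniteField.isSquare_iff (by rwa [ZMod.ringChar_zmod_n]) (neg_ne_zero.mpr hn), ZMod.card]

theorem isSquare_neg_natCast_of_forall_conj_eq {χ : DirichletCharacter ℂ n}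
    (hprim : χ.IsPrimitive) (hodd : χ.Odd) (hreal : ∀ a, starRingEnd ℂ (χ a) = χ a)
    (hp2 : p ≠ 2) (hχp : χ p = 1) : IsSquare (-(n : ZMod p)) := by
  have hq := MulChar.isQuadratic_of_forall_conj_eq hreal
  have hqℤ := hq.isQuadratic_toIntChar
  refine isSquare_neg_natCast hqℤ ?_ ?_ hp2 ?_
  · rw [IsPrimitive, ← conductor_ringHomComp_intCast hqℤ (R := ℂ) (by simp),
      hq.toIntChar_ringHomComp]
    exact hprim
  · show hq.toIntChar (-1) = -1
    exact_mod_cast (hq.intCast_toIntChar_apply (-1)).trans hodd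
  · exact_mod_cast (hq.intCast_toIntChar_apply p).trans hχp

end DirichletCharacter

def formValue (f : ℤ × ℤ × ℤ) (x y : ℤ) : ℤ := f.1 * x ^ 2 + f.2.1 * x * y + f.2.2 * y ^ 2

def Represents (f : ℤ × ℤ × ℤ) (m : ℤ) : Prop := ∃ x y, formValue f x y = m

lemma mk_mem_reducedForms {Δ a b c : ℤ} : (a, b, c) ∈ reducedForms Δ ↔
    0 < a ∧ 0 < c ∧ b ^ 2 - 4 * a * c = Δ ∧ -a < b ∧ b ≤ a ∧ a ≤ c ∧ (a = c → 0 ≤ b) ∧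
      Int.gcd (Int.gcd a b) c = 1 := Iff.rfl

section Reduction

variable {a b c m : ℤ}

lemma Represents.translate (q : ℤ) (h : Represents (a, b, c) m) :
    Represents (a, b + 2 * a * q, a * q ^ 2 + b * q + c) m := by
  obtain ⟨x, y, rfl⟩ := h
  exact ⟨x - q * y, y, by simp only [formValue]; ring⟩

lemma Represents.swap (h : Represents (a, b, c) m) : Represents (c, -b, a) m := by
  obtain ⟨x, y, rfl⟩ := h
  exact ⟨-y, x, by simp only [formValue]; ring⟩

lemma gcd_gcd_eq_one_of_forall_dvd {a' b' c' : ℤ} (h : Int.gcd (Int.gcd a b) c = 1)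
    (hdvd : ∀ d : ℤ, d ∣ a' → d ∣ b' → d ∣ c' → d ∣ a ∧ d ∣ b ∧ d ∣ c) :
    Int.gcd (Int.gcd a' b') c' = 1 := by
  set g := Int.gcd (Int.gcd a' b') c'
  have hg : (g : ℤ) ∣ Int.gcd a' b' := Int.gcd_dvd_left _ _
  obtain ⟨ha, hb, hc⟩ := hdvd g (hg.trans (Int.gcd_dvd_left _ _))
    (hg.trans (Int.gcd_dvd_right _ _)) (Int.gcd_dvd_right _ _)
  exact Nat.dvd_one.mp <| h ▸
    Int.natCast_dvd_natCast.mp (Int.dvd_coe_gcd (Int.dvd_coe_gcd ha hb) hc)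

lemma gcd_gcd_translate_eq_one (q : ℤ) (h : Int.gcd (Int.gcd a b) c = 1) :
    Int.gcd (Int.gcd a (b + 2 * a * q)) (a * q ^ 2 + b * q + c) = 1 := by
  refine gcd_gcd_eq_one_of_forall_dvd h fun d ha hb hc ↦ ?_
  have hb' : d ∣ b := by simpa using hb.sub (ha.mul_left 2 |>.mul_right q)
  have hc' := hc.sub ((ha.mul_right (q ^ 2)).add (hb'.mul_right q))
  rw [add_sub_cancel_left] at hc'
  exact ⟨ha, hb', hc'⟩

lemma gcd_gcd_swap_eq_one (h : Int.gcd (Int.gcd a b) c = 1) :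
    Int.gcd (Int.gcd c (-b)) a = 1 :=
  gcd_gcd_eq_one_of_forall_dvd h fun _ hc hb ha ↦ ⟨ha, dvd_neg.mp hb, hc⟩

variable {Δ : ℤ}

lemma exists_abs_add_two_mul_mul_le (b : ℤ) (ha : 0 < a) : ∃ q, |b + 2 * a * q| ≤ a := by
  refine ⟨-((b + a) / (2 * a)), abs_le.mpr ?_⟩
  have h₁ := Int.emod_nonneg (b + a) (by omega : 2 * a ≠ 0)
  have h₂ := Int.emod_lt_of_pos (b + a) (by omega : 0 < 2 * a)
  have h₃ := Int.emod_def (b + a) (2 * a)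
  constructor <;> nlinarith

lemma exists_mem_reducedForms_of_abs_le_of_le (ha : 0 < a) (hba : |b| ≤ a) (hac : a ≤ c)
    (hdisc : b ^ 2 - 4 * a * c = Δ) (hgcd : Int.gcd (Int.gcd a b) c = 1)
    (hm : Represents (a, b, c) m) : ∃ f ∈ reducedForms Δ, Represents f m := by
  obtain ⟨hb₁, hb₂⟩ := abs_le.mp hba
  by_cases hbot : b = -a
  · subst hbot
    refine ⟨(a, a, c), mk_mem_reducedForms.mpr ⟨ha, by omega, by linear_combination hdisc,
      by omega, le_rfl, hac, fun _ ↦ ha.le, ?_⟩, ?_⟩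
    · simpa using gcd_gcd_translate_eq_one 1 hgcd
    · convert hm.translate 1 using 3 <;> ring
  by_cases hedge : a = c ∧ b < 0
  · obtain ⟨rfl, hb⟩ := hedge
    exact ⟨(a, -b, a), mk_mem_reducedForms.mpr ⟨ha, ha, by linear_combination hdisc, by omega,
      by omega, le_rfl, fun _ ↦ by omega, gcd_gcd_swap_eq_one hgcd⟩, hm.swap⟩
  · exact ⟨(a, b, c), mk_mem_reducedForms.mpr
      ⟨ha, by omega, hdisc, by omega, hb₂, hac, by omega, hgcd⟩, hm⟩

end Reduction

theorem exists_mem_reducedForms_of_represents {Δ a b c m : ℤ} (hΔ : Δ < 0) (ha : 0 < a)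
    (hdisc : b ^ 2 - 4 * a * c = Δ) (hgcd : Int.gcd (Int.gcd a b) c = 1)
    (hm : Represents (a, b, c) m) : ∃ f ∈ reducedForms Δ, Represents f m := by
  have hc : 0 < c := by nlinarith
  by_cases hba : a < |b|
  · obtain ⟨q, hq⟩ := exists_abs_add_two_mul_mul_le b ha
    exact exists_mem_reducedForms_of_represents hΔ ha (by linear_combination hdisc)
      (gcd_gcd_translate_eq_one q hgcd) (hm.translate q)
  by_cases hca : c < a
  · exact exists_mem_reducedForms_of_represents hΔ hc (by linear_combination hdisc)
      (gcd_gcd_swap_eq_one hgcd) hm.swap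
  exact exists_mem_reducedForms_of_abs_le_of_le ha (not_lt.mp hba) (not_lt.mp hca) hdisc hgcd hm
termination_by (2 * a + |b|).toNat
decreasing_by
  all_goals
    try rw [abs_neg]
    have := abs_nonneg b
    omega

lemma exists_sq_sub_four_mul_eq {Δ : ℤ} (hΔ : Δ % 4 = 0 ∨ Δ % 4 = 1) {p : ℕ} [Fact p.Prime]
    (hp2 : p ≠ 2) (hsq : IsSquare (Δ : ZMod p)) : ∃ b c : ℤ, b ^ 2 - 4 * p * c = Δ := by
  obtain ⟨s, hs⟩ := hsq
  obtain ⟨k, hk⟩ : Odd (p : ℤ) := by exact_mod_cast (Fact.out : p.Prime).odd_of_ne_two hp2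
  set t : ℤ := (s.val : ℤ)
  -- `b ≡ t (mod p)` and, since `p + 1` is even, `b ≡ Δ (mod 2)`
  set b := t + p * (t - Δ)
  have hp : (p : ℤ) ∣ b ^ 2 - Δ := by
    rw [← ZMod.intCast_zmod_eq_zero_iff_dvd]
    simp [b, t, hs, sq]
  have h4 : (4 : ℤ) ∣ b ^ 2 - Δ := by
    obtain ⟨j, hj⟩ : ∃ j, b = Δ + 2 * j := ⟨(t - Δ) * (k + 1), by simp only [b]; rw [hk]; ring⟩
    rcases hΔ with h | h
    · obtain ⟨i, rfl⟩ : (4 : ℤ) ∣ Δ := by omega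
      exact ⟨4 * i ^ 2 - i + 4 * i * j + j ^ 2, by rw [hj]; ring⟩
    · obtain ⟨i, hi⟩ : (4 : ℤ) ∣ Δ - 1 := by omega
      obtain rfl : Δ = 4 * i + 1 := by omega
      exact ⟨4 * i ^ 2 + i + (4 * i + 1) * j + j ^ 2, by rw [hj]; ring⟩
  have hcop : IsCoprime (4 : ℤ) p := by
    have : Nat.Coprime (2 ^ 2) p :=
      .pow_left 2 (Nat.coprime_two_left.mpr ((Fact.out : p.Prime).odd_of_ne_two hp2))
    exact Int.isCoprime_iff_gcd_eq_one.mpr this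
  obtain ⟨c, hc⟩ := hcop.mul_dvd h4 hp
  exact ⟨b, c, by linear_combination hc⟩

lemma IsFundamentalDiscriminant.emod_four {Δ : ℤ} (h : IsFundamentalDiscriminant Δ) :
    Δ % 4 = 0 ∨ Δ % 4 = 1 := by
  rcases h with ⟨h, -⟩ | ⟨h, -⟩ <;> omega

lemma exists_mem_reducedForms_represents_prime {Δ : ℤ} (hΔ : Δ < 0)
    (hmod : Δ % 4 = 0 ∨ Δ % 4 = 1) {p : ℕ} [Fact p.Prime] (hp2 : p ≠ 2)
    (hsq : IsSquare (Δ : ZMod p)) (hΔp : (Δ : ZMod p) ≠ 0) :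
    ∃ f ∈ reducedForms Δ, Represents f p := by
  obtain ⟨b, c, hdisc⟩ := exists_sq_sub_four_mul_eq hmod hp2 hsq
  refine exists_mem_reducedForms_of_represents hΔ (Nat.cast_pos.mpr (Fact.out : p.Prime).pos)
    hdisc ?_ ⟨1, 0, by simp [formValue]⟩
  set g := Int.gcd (Int.gcd p b) c
  have hg : (g : ℤ) ∣ Int.gcd p b := Int.gcd_dvd_left _ _
  rcases (Nat.dvd_prime Fact.out).mp (Int.natCast_dvd_natCast.mp
    (hg.trans (Int.gcd_dvd_left _ _))) with h | h
  · exact h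
  · have hb : (p : ℤ) ∣ b := h ▸ hg.trans (Int.gcd_dvd_right _ _)
    have hc : (p : ℤ) ∣ c := h ▸ Int.gcd_dvd_right _ _
    refine absurd ((ZMod.intCast_zmod_eq_zero_iff_dvd _ _).mpr ?_) hΔp
    rw [← hdisc]
    exact (hb.pow two_ne_zero).sub ((dvd_mul_left _ _).mul_right c)

open DirichletCharacter in
theorem exists_mem_reducedForms_represents_of_apply_eq_one {Δ : ℤ} (hneg : Δ < 0)
    (hfund : IsFundamentalDiscriminant Δ) {χ : DirichletCharacter ℂ Δ.natAbs}
    (hprim : χ.IsPrimitive) (hodd : χ.Odd) (hreal : ∀ a, starRingEnd ℂ (χ a) = χ a)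
    {p : ℕ} (hp : p.Prime) (hp2 : p ≠ 2) (hχp : χ p = 1) :
    ∃ f ∈ reducedForms Δ, Represents f p := by
  have := Fact.mk hp
  have : NeZero Δ.natAbs := ⟨by omega⟩
  have hcast : (Δ : ZMod p) = -(Δ.natAbs : ZMod p) := by
    rw [← Int.cast_natCast, Int.natCast_natAbs, abs_of_neg hneg, Int.cast_neg, neg_neg]
  refine exists_mem_reducedForms_represents_prime hneg hfund.emod_four hp2 ?_ ?_
  · rw [hcast]
    exact isSquare_neg_natCast_of_forall_conj_eq hprim hodd hreal hp2 hχp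
  · rw [hcast, neg_ne_zero]
    exact natCast_ne_zero_of_apply_eq_one hp hχp

lemma three_mul_mul_le_of_mem_reducedForms {Δ a b c : ℤ} (hf : (a, b, c) ∈ reducedForms Δ) :
    3 * a * c ≤ -Δ := by
  obtain ⟨ha, hc, rfl, hb₁, hb₂, hac, -⟩ := mk_mem_reducedForms.mp hf
  nlinarith

lemma reducedForms_finite (Δ : ℤ) : (reducedForms Δ).Finite := by
  refine (Set.finite_Icc (Δ, Δ, Δ) (-Δ, -Δ, -Δ)).subset fun ⟨a, b, c⟩ hf ↦ ?_
  have h3 := three_mul_mul_le_of_mem_reducedForms hf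
  obtain ⟨ha, hc, -, hb₁, hb₂, hac, -⟩ := mk_mem_reducedForms.mp hf
  have : a ≤ -Δ := by nlinarith
  have : c ≤ -Δ := by nlinarith
  simp only [Set.mem_Icc, Prod.mk_le_mk]
  omega

lemma reducedForms_nonempty {Δ : ℤ} (hΔ : Δ < 0) (hmod : Δ % 4 = 0 ∨ Δ % 4 = 1) :
    (reducedForms Δ).Nonempty := by
  rcases hmod with h | h
  · obtain ⟨t, rfl⟩ : (4 : ℤ) ∣ Δ := by omega
    exact ⟨(1, 0, -t), mk_mem_reducedForms.mpr
      ⟨one_pos, by omega, by ring, by norm_num, zero_le_one, by omega, fun _ ↦ le_rfl, by simp⟩⟩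
  · obtain ⟨t, ht⟩ : (4 : ℤ) ∣ 1 - Δ := by omega
    exact ⟨(1, 1, t), mk_mem_reducedForms.mpr
      ⟨one_pos, by omega, by linear_combination ht, by norm_num, le_rfl, by omega,
        fun _ ↦ zero_le_one, by simp⟩⟩

open Finset

lemma card_Icc_prod_Icc_floor_le {u v : ℝ} (hu : 0 ≤ u) (hv : 0 ≤ v) :
    (#(Icc (-⌊u⌋) ⌊u⌋ ×ˢ Icc 0 ⌊v⌋) : ℝ) ≤ (2 * u + 1) * (v + 1) := by
  have hu' := Int.floor_nonneg.mpr hu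
  have hv' := Int.floor_nonneg.mpr hv
  have hcard : (#(Icc (-⌊u⌋) ⌊u⌋ ×ˢ Icc 0 ⌊v⌋) : ℤ) = (2 * ⌊u⌋ + 1) * (⌊v⌋ + 1) := by
    rw [card_product, Int.card_Icc, Int.card_Icc, Nat.cast_mul]
    congr 1 <;> omega
  rw [← Int.cast_natCast, hcard]
  push_cast
  gcongr
  · exact Int.floor_le u
  · exact Int.floor_le v

lemma two_mul_add_one_mul_add_one_le {u v t : ℝ} (hu : 0 ≤ u) (hv : 0 ≤ v) (ht : 1 ≤ t)
    (hu2 : 3 * u ^ 2 ≤ 4 * t ^ 2) (hv2 : 3 * v ^ 2 ≤ 4 * t ^ 2)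
    (huv : 3 * (u * v) ^ 2 ≤ 16 * t ^ 2) : (2 * u + 1) * (v + 1) ≤ 11 * t := by
  have hu' : u ≤ 6 / 5 * t := by nlinarith
  have hv' : v ≤ 6 / 5 * t := by nlinarith
  have huv' : u * v ≤ 5 / 2 * t := by nlinarith [mul_nonneg hu hv]
  nlinarith

noncomputable def formBox (Δ N : ℤ) (f : ℤ × ℤ × ℤ) : Finset (ℤ × ℤ) :=
  Icc (-⌊√(4 * f.2.2 * N / -Δ : ℝ)⌋) ⌊√(4 * f.2.2 * N / -Δ : ℝ)⌋ ×ˢ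
    Icc 0 ⌊√(4 * f.1 * N / -Δ : ℝ)⌋

lemma mem_Icc_floor_sqrt_of_sq_le {x : ℤ} {q : ℝ} (h : (x : ℝ) ^ 2 ≤ q) :
    x ∈ Icc (-⌊√q⌋) ⌊√q⌋ := by
  have : |x| ≤ ⌊√q⌋ := Int.le_floor.mpr (by push_cast; exact Real.abs_le_sqrt h)
  exact mem_Icc.mpr (abs_le.mp this)

lemma sq_le_of_formValue_le {a b c x y N : ℤ} (hc : 0 < c) (hΔ : b ^ 2 - 4 * a * c < 0)
    (h : formValue (a, b, c) x y ≤ N) :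
    (x : ℝ) ^ 2 ≤ 4 * c * N / -((b ^ 2 - 4 * a * c : ℤ) : ℝ) := by
  rw [le_div_iff₀ (by exact_mod_cast neg_pos.mpr hΔ)]
  have key : 4 * c * formValue (a, b, c) x y =
      (2 * c * y + b * x) ^ 2 - (b ^ 2 - 4 * a * c) * x ^ 2 := by
    simp only [formValue]; ring
  have : x ^ 2 * -(b ^ 2 - 4 * a * c) ≤ 4 * c * N := by
    nlinarith [sq_nonneg (2 * c * y + b * x)]
  exact_mod_cast this

lemma mem_image_formBox {Δ N m : ℤ} {f : ℤ × ℤ × ℤ} (hf : f ∈ reducedForms Δ)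
    (hm : Represents f m) (hmN : m ≤ N) :
    m ∈ (formBox Δ N f).image fun q ↦ formValue f q.1 q.2 := by
  obtain ⟨a, b, c⟩ := f
  have h3 := three_mul_mul_le_of_mem_reducedForms hf
  obtain ⟨ha, hc, rfl, -⟩ := mk_mem_reducedForms.mp hf
  obtain ⟨x, y, rfl⟩ := hm
  wlog hy : 0 ≤ y generalizing x y
  · have hneg : formValue (a, b, c) (-x) (-y) = formValue (a, b, c) x y := by
      simp only [formValue]; ring
    simpa [hneg] using this (-x) (-y) (by rwa [hneg]) (by omega)
  have hD : b ^ 2 - 4 * a * c < 0 := by nlinarith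
  have hswap : formValue (c, b, a) y x = formValue (a, b, c) x y := by
    simp only [formValue]; ring
  refine mem_image.mpr ⟨(x, y), mem_product.mpr ⟨mem_Icc_floor_sqrt_of_sq_le ?_,
    mem_Icc.mpr ⟨hy, (mem_Icc.mp (mem_Icc_floor_sqrt_of_sq_le ?_)).2⟩⟩, rfl⟩
  · exact sq_le_of_formValue_le hc hD hmN
  · have := sq_le_of_formValue_le (a := c) (c := a) (x := y) (y := x) ha (by linarith)
      (hswap ▸ hmN)
    rwa [mul_right_comm 4 c a] at this

lemma one_le_div_sqrt {D N : ℝ} (hD : 1 ≤ D) (hN : D ≤ N) : 1 ≤ N / √D := by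
  rw [le_div_iff₀ (by positivity), one_mul]
  exact ((Real.sqrt_le_left (by positivity)).mpr (by nlinarith)).trans hN

lemma card_formBox_le {Δ N : ℤ} {f : ℤ × ℤ × ℤ} (hf : f ∈ reducedForms Δ) (hN : -Δ ≤ N) :
    (#(formBox Δ N f) : ℝ) ≤ 11 * (N / √(-Δ : ℝ)) := by
  obtain ⟨a, b, c⟩ := f
  rw [formBox]
  dsimp only
  have h3 : (3 * a * c : ℝ) ≤ -Δ := by exact_mod_cast three_mul_mul_le_of_mem_reducedForms hf
  obtain ⟨ha, hc, -⟩ := mk_mem_reducedForms.mp hf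
  have ha : (1 : ℝ) ≤ a := by exact_mod_cast ha
  have hc : (1 : ℝ) ≤ c := by exact_mod_cast hc
  have hN : (-Δ : ℝ) ≤ N := by exact_mod_cast hN
  set D : ℝ := -Δ
  have hD : 1 ≤ D := by nlinarith
  have hN0 : 0 ≤ (N : ℝ) := by linarith
  have hsqrtD : √D ^ 2 = D := Real.sq_sqrt (by positivity)
  set t := N / √D
  have ht : 1 ≤ t := one_le_div_sqrt hD hN
  have ht2 : t ^ 2 = N ^ 2 / D := by rw [div_pow, hsqrtD]
  refine (card_Icc_prod_Icc_floor_le (Real.sqrt_nonneg _) (Real.sqrt_nonneg _)).trans ?_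
  refine two_mul_add_one_mul_add_one_le (Real.sqrt_nonneg _) (Real.sqrt_nonneg _) ht ?_ ?_ ?_
  · rw [Real.sq_sqrt (by positivity), ht2]
    field_simp
    nlinarith
  · rw [Real.sq_sqrt (by positivity), ht2]
    field_simp
    nlinarith
  · rw [mul_pow, Real.sq_sqrt (by positivity), Real.sq_sqrt (by positivity), ht2]
    field_simp
    nlinarith

lemma ncard_le_sum_card_formBox_add_one {Δ N : ℤ} {S : Set ℕ}
    (hS : ∀ p ∈ S, p ≠ 2 → (p : ℤ) ≤ N ∧ ∃ f ∈ reducedForms Δ, Represents f p) :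
    S.ncard ≤ ∑ f ∈ (reducedForms_finite Δ).toFinset, #(formBox Δ N f) + 1 := by
  classical
  set T : Finset ℤ := (reducedForms_finite Δ).toFinset.biUnion fun f ↦
    (formBox Δ N f).image fun q ↦ formValue f q.1 q.2
  have hsub : ((↑) '' S : Set ℤ) ⊆ ↑(insert 2 T) := by
    rintro _ ⟨p, hp, rfl⟩
    by_cases hp2 : p = 2
    · simp [hp2]
    obtain ⟨hpN, f, hf, hrep⟩ := hS p hp hp2
    exact mem_insert_of_mem (mem_biUnion.mpr
      ⟨f, (reducedForms_finite Δ).mem_toFinset.mpr hf, mem_image_formBox hf hrep hpN⟩)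
  calc S.ncard = ((↑) '' S : Set ℤ).ncard :=
        (Set.ncard_image_of_injective _ Nat.cast_injective).symm
    _ ≤ #(insert 2 T) := by
        rw [← Set.ncard_coe_finset]
        exact Set.ncard_le_ncard hsub (finite_toSet _)
    _ ≤ #T + 1 := card_insert_le _ _
    _ ≤ _ := by
        gcongr
        exact card_biUnion_le.trans (sum_le_sum fun f _ ↦ card_image_le)

/-- For a negative fundamental discriminant `Δ` with associated real primitive odd
character `χ = χ_Δ` mod `|Δ|`, and any `N > |Δ|`, the number of primes `p ≤ N` with
`χ(p) = 1` is at most `12 h(Δ) N / √|Δ|`. -/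
theorem primes_chi_one_count (Δ : ℤ) (hneg : Δ < 0) (hfund : IsFundamentalDiscriminant Δ)
    (χ : DirichletCharacter ℂ Δ.natAbs) (hprim : χ.IsPrimitive) (hodd : χ.Odd)
    (hreal : ∀ a : ZMod Δ.natAbs, (starRingEnd ℂ) (χ a) = χ a)
    (N : ℤ) (hN : |Δ| < N) :
    (({p : ℕ | p.Prime ∧ (p : ℤ) ≤ N ∧ χ ((p : ℕ) : ZMod Δ.natAbs) = 1}.ncard : ℝ))
      ≤ 12 * (classNumber Δ : ℝ) * (N : ℝ) / Real.sqrt ((|Δ| : ℤ) : ℝ) := by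
  rw [abs_of_neg hneg] at hN ⊢
  have hcount := ncard_le_sum_card_formBox_add_one
    (S := {p : ℕ | p.Prime ∧ (p : ℤ) ≤ N ∧ χ p = 1}) fun p ⟨hp, hpN, hχp⟩ hp2 ↦ ⟨hpN,
      exists_mem_reducedForms_represents_of_apply_eq_one hneg hfund hprim hodd hreal hp hp2 hχp⟩
  have hD : (1 : ℝ) ≤ -Δ := by exact_mod_cast (by omega : 1 ≤ -Δ)
  have hDN : (-Δ : ℝ) ≤ N := by exact_mod_cast hN.le
  have hh : (1 : ℝ) ≤ classNumber Δ := by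
    exact_mod_cast (Set.ncard_pos (reducedForms_finite Δ)).mpr
      (reducedForms_nonempty hneg hfund.emod_four)
  have ht := one_le_div_sqrt hD hDN
  push_cast
  calc _ ≤ ∑ f ∈ (reducedForms_finite Δ).toFinset, (#(formBox Δ N f) : ℝ) + 1 := by
        exact_mod_cast hcount
    _ ≤ ∑ f ∈ (reducedForms_finite Δ).toFinset, 11 * (N / √(-Δ : ℝ)) + 1 := by
        gcongr with f hf
        exact card_formBox_le ((reducedForms_finite Δ).mem_toFinset.mp hf) hN.le
    _ = classNumber Δ * (11 * (N / √(-Δ : ℝ))) + 1 := by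
        rw [sum_const, nsmul_eq_mul, classNumber,
          Set.ncard_eq_toFinset_card _ (reducedForms_finite Δ)]
    _ ≤ _ := by
        rw [mul_div_assoc]
        nlinarith
end

section
/- For every fundamental discriminant Δ > 0 and integer N ≥ 1, |Σ_{n=1}^{NΔ} χ_Δ(n) log n + L'(0, χ_Δ)| ≤ 2Δ/N, where L'(0, χ_Δ) is the derivative at s = 0 of the entire continuation of L(s, χ_Δ). In particular, Σ_{n=1}^{NΔ} χ_Δ(n) log n → -L'(0, χ_Δ) as N → ∞. -/
/-!
Write `A` and `C` for the first and second partial sums of `χ = χ_D`. Since `χ` is `D`-periodic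
with `∑_{n ≤ D} χ(n) = 0`, and evenness (via `n ↦ D - n`) gives `∑_{n ≤ D} n χ(n) = 0`, both `A`
and `C` are `D`-periodic and vanish at multiples of `D`; hence `‖C(n)‖ ≤ D²`.

Summing by parts twice, `L(s, χ) = ∑ C(n) Δ²[n^{-s}]` for `re s > 1`, where `Δ²` is the second
forward difference. As `Δ²[n^{-s}] = O(|s|² n^{-re s - 2})`, the right side is holomorphic on the
disc `|s - 1| < 3/2`, so by the identity theorem it may be differentiated termwise at `s = 0`:
`-L'(0, χ) = ∑ C(n) Δ²[log n]`. The same summations by parts turn `∑_{n ≤ ND} χ(n) log n` into a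
partial sum of this series, and since `Δ²[log n] ≤ 0` telescopes, the tail beyond `M = ND` is at
most `D² (log (M + 2) - log (M + 1)) ≤ D² / (M + 1) ≤ D / N`.
-/

open Finset Function Filter Topology fwdDiff

section PartialSum

variable {M : Type*}

def partialSum [AddCommMonoid M] (x : ℕ → M) (n : ℕ) : M := ∑ m ∈ Icc 1 n, x m

@[simp] lemma partialSum_zero [AddCommMonoid M] (x : ℕ → M) : partialSum x 0 = 0 := by
  simp [partialSum]

lemma partialSum_succ [AddCommMonoid M] (x : ℕ → M) (n : ℕ) :
    partialSum x (n + 1) = partialSum x n + x (n + 1) :=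
  sum_Icc_succ_top (by omega) x

lemma partialSum_sub_partialSum_pred [AddCommGroup M] {x : ℕ → M} (hx0 : x 0 = 0) (n : ℕ) :
    partialSum x n - partialSum x (n - 1) = x n := by
  cases n with
  | zero => simp [hx0]
  | succ n => simp [partialSum_succ]

lemma partialSum_eq_sum_range [AddCommMonoid M] {x : ℕ → M} (hx0 : x 0 = 0)
    (n : ℕ) : partialSum x n = ∑ m ∈ range (n + 1), x m := by
  rw [range_eq_Ico, sum_eq_sum_Ico_succ_bot n.succ_pos, hx0, zero_add]
  rfl

lemma periodic_partialSum [AddCommMonoid M] {x : ℕ → M} {D : ℕ} (hx : Periodic x D)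
    (hD : partialSum x D = 0) : Periodic (partialSum x) D := by
  intro n
  induction n with
  | zero => simp [hD]
  | succ n ih =>
    rw [Nat.add_right_comm, partialSum_succ, ih, Nat.add_right_comm, hx, partialSum_succ]

lemma norm_partialSum_le [SeminormedAddCommGroup M] {x : ℕ → M} {B : ℝ}
    (hB : ∀ m, ‖x m‖ ≤ B) (n : ℕ) : ‖partialSum x n‖ ≤ n * B :=
  calc ‖partialSum x n‖ ≤ ∑ m ∈ Icc 1 n, ‖x m‖ := norm_sum_le _ _
    _ ≤ ∑ m ∈ Icc 1 n, B := sum_le_sum fun m _ ↦ hB m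
    _ = n * B := by simp

lemma norm_partialSum_le_of_periodic [SeminormedAddCommGroup M] {x : ℕ → M} {B : ℝ} {D : ℕ}
    (hD : 0 < D) (hS : Periodic (partialSum x) D) (hB : ∀ m, ‖x m‖ ≤ B) (n : ℕ) :
    ‖partialSum x n‖ ≤ D * B := by
  rw [← hS.map_mod_nat n]
  exact (norm_partialSum_le hB _).trans <| mul_le_mul_of_nonneg_right
    (mod_cast (n.mod_lt hD).le) ((norm_nonneg _).trans (hB 0))

variable {R : Type*} [CommRing R]

lemma partialSum_partialSum_eq (x : ℕ → R) (n : ℕ) :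
    partialSum (partialSum x) n = (n + 1) * partialSum x n - ∑ m ∈ Icc 1 n, m * x m := by
  induction n with
  | zero => simp
  | succ n ih =>
    rw [partialSum_succ, ih, partialSum_succ, sum_Icc_succ_top (by omega)]
    push_cast
    ring

lemma sum_Icc_mul_eq_sub_sum_partialSum_mul_fwdDiff (x b : ℕ → R) (M : ℕ) :
    ∑ n ∈ Icc 1 M, x n * b n =
      partialSum x M * b (M + 1) - ∑ n ∈ Icc 1 M, partialSum x n * Δ_[1] b n := by
  induction M with
  | zero => simp
  | succ M ih =>
    rw [sum_Icc_succ_top (by omega), ih, sum_Icc_succ_top (by omega), partialSum_succ]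
    simp only [fwdDiff]
    ring

lemma sum_Icc_mul_eq_sum_partialSum_partialSum_mul {x : ℕ → R} {M : ℕ}
    (hA : partialSum x M = 0) (hC : partialSum (partialSum x) M = 0) (b : ℕ → R) :
    ∑ n ∈ Icc 1 M, x n * b n = ∑ n ∈ Icc 1 M, partialSum (partialSum x) n * Δ_[1] ^[2] b n := by
  rw [sum_Icc_mul_eq_sub_sum_partialSum_mul_fwdDiff, hA, zero_mul, zero_sub,
    sum_Icc_mul_eq_sub_sum_partialSum_mul_fwdDiff, hC, zero_mul, zero_sub, neg_neg]
  rfl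

variable [TopologicalSpace R] [IsTopologicalRing R] [T2Space R]

lemma tsum_mul_eq_neg_tsum_partialSum_mul_fwdDiff {x g : ℕ → R} (hx0 : x 0 = 0)
    (h₀ : Summable fun n ↦ partialSum x n * g n)
    (h₁ : Summable fun n ↦ partialSum x n * g (n + 1)) :
    ∑' n, x n * g n = -∑' n, partialSum x n * Δ_[1] g n := by
  have h₁' : Summable fun n ↦ partialSum x (n - 1) * g n :=
    (summable_nat_add_iff 1).mp h₁
  have hshift : ∑' n, partialSum x (n - 1) * g n = ∑' n, partialSum x n * g (n + 1) := by
    rw [h₁'.tsum_eq_zero_add]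
    simp
  simp_rw [← partialSum_sub_partialSum_pred hx0, sub_mul]
  rw [h₀.tsum_sub h₁', hshift, ← h₀.tsum_sub h₁, ← tsum_neg]
  congr with n
  simp only [fwdDiff]
  ring

end PartialSum

lemma summable_mul_of_norm_le {R : Type*} [NormedRing R] [CompleteSpace R] {c g : ℕ → R} {B : ℝ}
    (hc : ∀ n, ‖c n‖ ≤ B) (hg : Summable fun n ↦ ‖g n‖) : Summable fun n ↦ c n * g n :=
  Summable.of_norm_bounded (hg.mul_left B) fun n ↦
    (norm_mul_le _ _).trans (mul_le_mul_of_nonneg_right (hc n) (norm_nonneg _))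

lemma LSeries_eq_tsum_partialSum_partialSum_mul {x : ℕ → ℂ} {B : ℝ} (hx0 : x 0 = 0)
    (hC : ∀ n, ‖partialSum (partialSum x) n‖ ≤ B) {s : ℂ} (hs : 1 < s.re) :
    LSeries x s =
      ∑' n, partialSum (partialSum x) n * Δ_[1] ^[2] (fun m : ℕ ↦ (m : ℂ) ^ (-s)) n := by
  set g : ℕ → ℂ := fun m ↦ (m : ℂ) ^ (-s)
  have hg : Summable fun n ↦ ‖g n‖ := by
    simp_rw [g, Complex.norm_natCast_cpow_of_re_ne_zero _ (by simp; linarith : (-s).re ≠ 0)]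
    exact Real.summable_nat_rpow.mpr (by simp; linarith)
  have hg₁ : Summable fun n ↦ ‖g (n + 1)‖ := (summable_nat_add_iff (f := fun n ↦ ‖g n‖) 1).mpr hg
  have hΔg : Summable fun n ↦ ‖Δ_[1] g n‖ :=
    Summable.of_nonneg_of_le (fun _ ↦ norm_nonneg _) (fun n ↦ norm_sub_le (g (n + 1)) (g n))
      (hg₁.add hg)
  have hΔg₁ : Summable fun n ↦ ‖Δ_[1] g (n + 1)‖ :=
    (summable_nat_add_iff (f := fun n ↦ ‖Δ_[1] g n‖) 1).mpr hΔg
  have hA : ∀ n, ‖partialSum x n‖ ≤ 2 * B := fun n ↦ by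
    rw [← partialSum_sub_partialSum_pred (partialSum_zero x) n]
    linarith [norm_sub_le (partialSum (partialSum x) n) (partialSum (partialSum x) (n - 1)),
      hC n, hC (n - 1)]
  have hterm : ∀ n, LSeries.term x s n = x n * g n := fun n ↦ by
    rcases eq_or_ne n 0 with rfl | hn
    · simp [hx0]
    · simp [LSeries.term_of_ne_zero hn, g, div_eq_mul_inv, Complex.cpow_neg]
  rw [LSeries, tsum_congr hterm,
    tsum_mul_eq_neg_tsum_partialSum_mul_fwdDiff hx0 (summable_mul_of_norm_le hA hg)
      (summable_mul_of_norm_le hA hg₁),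
    tsum_mul_eq_neg_tsum_partialSum_mul_fwdDiff (partialSum_zero x)
      (summable_mul_of_norm_le hC hΔg) (summable_mul_of_norm_le hC hΔg₁), neg_neg]
  rfl

lemma norm_fwdDiff_iter_two_le {E : Type*} [NormedAddCommGroup E] [NormedSpace ℝ E]
    {f f' f'' : ℝ → E} {a K : ℝ} (hf : ∀ t, a ≤ t → HasDerivAt f (f' t) t)
    (hf' : ∀ t, a ≤ t → HasDerivAt f' (f'' t) t) (hK : ∀ t, a ≤ t → ‖f'' t‖ ≤ K) :
    ‖Δ_[1] ^[2] f a‖ ≤ K := by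
  have hΔf' : ∀ t, a ≤ t → ‖Δ_[1] f' t‖ ≤ K := fun t ht ↦ by
    simpa [fwdDiff] using norm_image_sub_le_of_norm_deriv_le_segment'
      (fun u hu ↦ (hf' u (ht.trans hu.1)).hasDerivWithinAt) (fun u hu ↦ hK u (ht.trans hu.1))
      (t + 1) ⟨by linarith, le_rfl⟩
  have hΔf : ∀ t, a ≤ t → HasDerivAt (Δ_[1] f) (Δ_[1] f' t) t := fun t ht ↦
    (hf (t + 1) (by linarith)).comp_add_const t 1 |>.sub (hf t ht)
  simpa [fwdDiff] using norm_image_sub_le_of_norm_deriv_le_segment'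
    (fun u hu ↦ (hΔf u hu.1).hasDerivWithinAt) (fun u hu ↦ hΔf' u hu.1) (a + 1)
    ⟨by linarith, le_rfl⟩

lemma hasDerivAt_ofReal_cpow_const_of_pos {t : ℝ} (ht : 0 < t) (c : ℂ) :
    HasDerivAt (fun u : ℝ ↦ (u : ℂ) ^ c) (c * (t : ℂ) ^ (c - 1)) t :=
  (Complex.hasStrictDerivAt_cpow_const (Complex.ofReal_mem_slitPlane.2 ht)).hasDerivAt.comp_ofReal

lemma norm_fwdDiff_iter_two_cpow_le {s : ℂ} (hs : -2 ≤ s.re) {n : ℕ} (hn : 1 ≤ n) :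
    ‖Δ_[1] ^[2] (fun m : ℕ ↦ (m : ℂ) ^ (-s)) n‖ ≤ ‖s‖ * (‖s‖ + 1) * (n : ℝ) ^ (-s.re - 2) := by
  have hn0 : (0 : ℝ) < n := by exact_mod_cast hn
  have hcast : Δ_[1] ^[2] (fun m : ℕ ↦ (m : ℂ) ^ (-s)) n =
      Δ_[1] ^[2] (fun t : ℝ ↦ (t : ℂ) ^ (-s)) n := by
    simp only [iterate_succ, iterate_zero, comp_apply, id, fwdDiff]
    push_cast
    ring_nf
  rw [hcast]
  refine norm_fwdDiff_iter_two_le (f' := fun t : ℝ ↦ -s * (t : ℂ) ^ (-s - 1))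
    (fun t ht ↦ hasDerivAt_ofReal_cpow_const_of_pos (hn0.trans_le ht) _)
    (fun t ht ↦ (hasDerivAt_ofReal_cpow_const_of_pos (hn0.trans_le ht) _).const_mul (-s))
    fun t ht ↦ ?_
  have ht0 : 0 < t := hn0.trans_le ht
  rw [norm_mul, norm_mul, norm_neg, Complex.norm_cpow_eq_rpow_re_of_pos ht0, mul_assoc]
  gcongr
  · calc ‖-s - 1‖ ≤ ‖-s‖ + ‖(1 : ℂ)‖ := norm_sub_le _ _
      _ = ‖s‖ + 1 := by simp
  · have hre : (-s - 1 - 1).re = -s.re - 2 := by simp; ring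
    exact hre ▸ Real.rpow_le_rpow_of_nonpos hn0 ht (by linarith)

lemma hasDerivAt_fwdDiff_iter_two_apply {𝕜 F : Type*} [NontriviallyNormedField 𝕜]
    [NormedAddCommGroup F] [NormedSpace 𝕜 F] {g : 𝕜 → ℕ → F} {g' : ℕ → F} {s : 𝕜} {n : ℕ}
    (hg : ∀ m, n ≤ m → HasDerivAt (fun s ↦ g s m) (g' m) s) :
    HasDerivAt (fun s ↦ Δ_[1] ^[2] (g s) n) (Δ_[1] ^[2] g' n) s :=
  ((hg (n + 2) (by omega)).sub (hg (n + 1) (by omega))).sub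
    ((hg (n + 1) (by omega)).sub (hg n le_rfl))

lemma hasDerivAt_natCast_cpow_neg {m : ℕ} (hm : m ≠ 0) (s : ℂ) :
    HasDerivAt (fun s : ℂ ↦ (m : ℂ) ^ (-s)) (-Real.log m * (m : ℂ) ^ (-s)) s := by
  simpa [Complex.natCast_log, mul_comm] using
    (hasDerivAt_neg s).const_cpow (c := (m : ℂ)) (Or.inl (Nat.cast_ne_zero.mpr hm))

-- On the disc `‖s‖ ≤ 5 / 2` and `-1 / 2 ≤ re s`; `35 / 4 = 5 / 2 * (5 / 2 + 1)`.
lemma norm_mul_fwdDiff_iter_two_cpow_le {c : ℕ → ℂ} {B : ℝ} (hc0 : c 0 = 0)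
    (hc : ∀ n, ‖c n‖ ≤ B) {s : ℂ} (hs : s ∈ Metric.ball (1 : ℂ) (3 / 2)) (n : ℕ) :
    ‖c n * Δ_[1] ^[2] (fun m : ℕ ↦ (m : ℂ) ^ (-s)) n‖ ≤
      B * (35 / 4) * (n : ℝ) ^ (-(3 / 2) : ℝ) := by
  rcases Nat.eq_zero_or_pos n with rfl | hn
  · simp [hc0]
  rw [Metric.mem_ball, dist_eq_norm] at hs
  have hs_norm : ‖s‖ ≤ 5 / 2 := by linarith [norm_le_norm_sub_add s 1, norm_one (α := ℂ)]
  have hs_re : -1 / 2 ≤ s.re := by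
    linarith [Complex.abs_re_le_norm (s - 1), neg_abs_le (s - 1).re, Complex.sub_re s 1,
      Complex.one_re]
  have hB : 0 ≤ B := (norm_nonneg _).trans (hc 0)
  rw [norm_mul, mul_assoc]
  refine mul_le_mul (hc n) ((norm_fwdDiff_iter_two_cpow_le (by linarith) hn).trans ?_)
    (norm_nonneg _) hB
  gcongr
  · nlinarith [norm_nonneg s]
  · exact_mod_cast hn
  · linarith

theorem hasSum_neg_deriv_zero_of_eq_LSeries {x : ℕ → ℂ} {B : ℝ} (hx0 : x 0 = 0)
    (hC : ∀ n, ‖partialSum (partialSum x) n‖ ≤ B) {E : ℂ → ℂ} (hE : Differentiable ℂ E)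
    (hEL : ∀ s : ℂ, 1 < s.re → E s = LSeries x s) :
    HasSum (fun n ↦ partialSum (partialSum x) n * Δ_[1] ^[2] (fun m : ℕ ↦ (Real.log m : ℂ)) n)
      (-deriv E 0) := by
  set c := partialSum (partialSum x)
  set F : ℕ → ℂ → ℂ := fun n s ↦ c n * Δ_[1] ^[2] (fun m : ℕ ↦ (m : ℂ) ^ (-s)) n
  -- `U` contains `0` and meets the half-plane `1 < re s`, where `E` is the L-series.
  set U := Metric.ball (1 : ℂ) (3 / 2)
  have hF : ∀ n s, HasDerivAt (F n)
      (c n * Δ_[1] ^[2] (fun m : ℕ ↦ -Real.log m * (m : ℂ) ^ (-s)) n) s := fun n s ↦ by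
    rcases Nat.eq_zero_or_pos n with rfl | hn
    · simpa [F, c] using hasDerivAt_const s (0 : ℂ)
    · exact (hasDerivAt_fwdDiff_iter_two_apply fun m hm ↦
        hasDerivAt_natCast_cpow_neg (by omega) s).const_mul (c n)
  have hFU : ∀ n, DifferentiableOn ℂ (F n) U := fun n s _ ↦
    (hF n s).differentiableAt.differentiableWithinAt
  have hbound : ∀ n, ∀ s ∈ U, ‖F n s‖ ≤ B * (35 / 4) * (n : ℝ) ^ (-(3 / 2) : ℝ) :=
    fun n s hs ↦ norm_mul_fwdDiff_iter_two_cpow_le (partialSum_zero _) hC hs n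
  have hu : Summable fun n : ℕ ↦ B * (35 / 4) * (n : ℝ) ^ (-(3 / 2) : ℝ) :=
    (Real.summable_nat_rpow.mpr (by norm_num)).mul_left _
  have h0U : (0 : ℂ) ∈ U := by simp [U]; norm_num
  have hEq : Set.EqOn (fun s ↦ ∑' n, F n s) E U := by
    refine ((Complex.differentiableOn_tsum_of_summable_norm hu hFU Metric.isOpen_ball
      hbound).analyticOnNhd Metric.isOpen_ball).eqOn_of_preconnected_of_eventuallyEq
      (hE.differentiableOn.analyticOnNhd Metric.isOpen_ball) (convex_ball _ _).isPreconnected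
      (z₀ := 5 / 4) (by simp [U, dist_eq_norm]; norm_num) ?_
    filter_upwards [(isOpen_lt continuous_const Complex.continuous_re).mem_nhds
      (show (1 : ℝ) < (5 / 4 : ℂ).re by norm_num)] with s hs
    exact (LSeries_eq_tsum_partialSum_partialSum_mul hx0 hC hs).symm.trans (hEL s hs).symm
  have hsum := Complex.hasSum_deriv_of_summable_norm hu hFU Metric.isOpen_ball hbound h0U
  rw [(hEq.eventuallyEq_of_mem (Metric.isOpen_ball.mem_nhds h0U)).deriv_eq] at hsum
  have hderiv : ∀ n, -deriv (F n) 0 = c n * Δ_[1] ^[2] (fun m : ℕ ↦ (Real.log m : ℂ)) n :=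
    fun n ↦ by
      rw [(hF n 0).deriv]
      simp [fwdDiff]
      ring
  simpa only [hderiv] using hsum.neg

lemma hasSum_sub_succ_of_antitone {f : ℕ → ℝ} (hf : Antitone f) {l : ℝ}
    (hl : Tendsto f atTop (𝓝 l)) : HasSum (fun n ↦ f n - f (n + 1)) (f 0 - l) := by
  rw [hasSum_iff_tendsto_nat_of_nonneg (fun n ↦ sub_nonneg.2 (hf n.le_succ))]
  simp_rw [sum_range_sub']
  exact tendsto_const_nhds.sub hl

lemma fwdDiff_log_le {n : ℕ} (hn : 1 ≤ n) : Δ_[1] (fun m : ℕ ↦ Real.log m) n ≤ 1 / n := by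
  have hn0 : (0 : ℝ) < n := by exact_mod_cast hn
  have h := Real.log_le_sub_one_of_pos (show 0 < ((n : ℝ) + 1) / n by positivity)
  rw [Real.log_div (by positivity) hn0.ne'] at h
  simp only [fwdDiff, Nat.cast_add, Nat.cast_one]
  calc Real.log (n + 1) - Real.log n ≤ (n + 1) / n - 1 := h
    _ = 1 / n := by field_simp; ring

lemma fwdDiff_iter_two_log_nonpos {n : ℕ} (hn : 1 ≤ n) :
    Δ_[1] ^[2] (fun m : ℕ ↦ Real.log m) n ≤ 0 := by
  have hn0 : (0 : ℝ) < n := by exact_mod_cast hn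
  have h := Real.log_le_log (by positivity)
    (show (n : ℝ) * (n + 2) ≤ (n + 1) * (n + 1) by nlinarith)
  rw [Real.log_mul (by positivity) (by positivity),
    Real.log_mul (by positivity) (by positivity)] at h
  simp only [iterate_succ, iterate_zero, comp_apply, id, fwdDiff, Nat.cast_add, Nat.cast_one]
  rw [add_assoc, one_add_one_eq_two]
  linarith

lemma norm_tsum_mul_fwdDiff_iter_two_log_le {c : ℕ → ℂ} {B : ℝ} (hc : ∀ n, ‖c n‖ ≤ B)
    {Q : ℕ} (hQ : 1 ≤ Q) :
    ‖∑' n, c (n + Q) * Δ_[1] ^[2] (fun m : ℕ ↦ (Real.log m : ℂ)) (n + Q)‖ ≤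
      B * Δ_[1] (fun m : ℕ ↦ Real.log m) Q := by
  set e : ℕ → ℝ := fun n ↦ Δ_[1] (fun m : ℕ ↦ Real.log m) (n + Q)
  have he_step : ∀ n, e n - e (n + 1) = -Δ_[1] ^[2] (fun m : ℕ ↦ Real.log m) (n + Q) :=
    fun n ↦ by
      simp only [e, iterate_succ, iterate_zero, comp_apply, id, fwdDiff]
      push_cast
      ring_nf
  have he_anti : Antitone e := antitone_nat_of_succ_le fun n ↦
    sub_nonneg.mp <| he_step n ▸ neg_nonneg.mpr (fwdDiff_iter_two_log_nonpos (by omega))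
  have he_lim : Tendsto e atTop (𝓝 0) := by
    refine (Real.tendsto_log_nat_add_one_sub_log.comp (tendsto_add_atTop_nat Q)).congr fun n ↦ ?_
    simp [e, fwdDiff]
  have he := (hasSum_sub_succ_of_antitone he_anti he_lim).mul_left B
  have hb : ∀ n, ‖c (n + Q) * Δ_[1] ^[2] (fun m : ℕ ↦ (Real.log m : ℂ)) (n + Q)‖ ≤
      B * (e n - e (n + 1)) := fun n ↦ by
    have h2 := fwdDiff_iter_two_log_nonpos (n := n + Q) (by omega)
    have hΔ : Δ_[1] ^[2] (fun m : ℕ ↦ (Real.log m : ℂ)) (n + Q) =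
        (Δ_[1] ^[2] (fun m : ℕ ↦ Real.log m) (n + Q) : ℝ) := by
      simp only [iterate_succ, iterate_zero, comp_apply, id, fwdDiff, Complex.ofReal_sub]
    rw [norm_mul, hΔ, Complex.norm_real, Real.norm_of_nonpos h2, he_step]
    exact mul_le_mul_of_nonneg_right (hc _) (neg_nonneg.mpr h2)
  simpa [e] using tsum_of_norm_bounded he hb

theorem norm_sum_mul_log_add_deriv_le {x : ℕ → ℂ} {B : ℝ} (hx0 : x 0 = 0)
    (hC : ∀ n, ‖partialSum (partialSum x) n‖ ≤ B) {E : ℂ → ℂ} (hE : Differentiable ℂ E)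
    (hEL : ∀ s : ℂ, 1 < s.re → E s = LSeries x s) {M : ℕ} (hA : partialSum x M = 0)
    (hCM : partialSum (partialSum x) M = 0) :
    ‖∑ n ∈ Icc 1 M, x n * Real.log n + deriv E 0‖ ≤ B / (M + 1) := by
  set w := fun n ↦ partialSum (partialSum x) n * Δ_[1] ^[2] (fun m : ℕ ↦ (Real.log m : ℂ)) n
  have hw := hasSum_neg_deriv_zero_of_eq_LSeries hx0 hC hE hEL
  have hpartial : ∑ n ∈ Icc 1 M, x n * Real.log n = ∑ n ∈ range (M + 1), w n := by
    rw [sum_Icc_mul_eq_sum_partialSum_partialSum_mul hA hCM]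
    exact partialSum_eq_sum_range (by simp) M
  have htail : ∑ n ∈ Icc 1 M, x n * Real.log n + deriv E 0 = -∑' n, w (n + (M + 1)) := by
    rw [hpartial, ← neg_neg (deriv E 0), ← hw.tsum_eq,
      ← hw.summable.sum_add_tsum_nat_add (M + 1)]
    ring
  have hB : 0 ≤ B := (norm_nonneg _).trans (hC 0)
  rw [htail, norm_neg]
  calc _ ≤ B * Δ_[1] (fun m : ℕ ↦ Real.log m) (M + 1) :=
        norm_tsum_mul_fwdDiff_iter_two_log_le hC (by omega)
    _ ≤ B * (1 / (M + 1 : ℕ)) := by gcongr; exact fwdDiff_log_le (by omega)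
    _ = B / (M + 1) := by push_cast; ring

lemma ZMod.sum_range_natCast {M : Type*} [AddCommMonoid M] {D : ℕ} [NeZero D]
    (f : ZMod D → M) : ∑ m ∈ range D, f m = ∑ a, f a :=
  sum_nbij' (fun m ↦ (m : ZMod D)) ZMod.val (fun _ _ ↦ mem_univ _)
    (fun a _ ↦ mem_range.mpr a.val_lt) (fun _ hm ↦ ZMod.val_natCast_of_lt (mem_range.mp hm))
    (fun a _ ↦ ZMod.natCast_zmod_val a) fun _ _ ↦ rfl

namespace DirichletCharacter

lemma periodic_natCast {D : ℕ} (χ : DirichletCharacter ℂ D) : Periodic (fun n : ℕ ↦ χ n) D :=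
  fun n ↦ by simp

variable {D : ℕ} [NeZero D] {χ : DirichletCharacter ℂ D}

lemma partialSum_natCast_eq_zero (hχ : χ ≠ 1) : partialSum (fun n : ℕ ↦ χ n) D = 0 := by
  have hχ0 : χ 0 = 0 := χ.map_zero' fun h ↦ hχ (χ.level_one' h)
  rw [partialSum_eq_sum_range (by simpa using hχ0), sum_range_succ, ZMod.natCast_self, hχ0,
    add_zero, ZMod.sum_range_natCast (f := χ), MulChar.sum_eq_zero_of_ne_one hχ]

lemma partialSum_partialSum_natCast_eq_zero (hχ : χ ≠ 1) (heven : χ.Even) :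
    partialSum (partialSum fun n : ℕ ↦ χ n) D = 0 := by
  have hχ0 : χ 0 = 0 := χ.map_zero' fun h ↦ hχ (χ.level_one' h)
  have hA := partialSum_natCast_eq_zero hχ
  have hsum : ∑ m ∈ range (D + 1), χ m = 0 :=
    (partialSum_eq_sum_range (x := fun n : ℕ ↦ χ n) (by simpa using hχ0) D).symm.trans hA
  have hreflect : ∑ m ∈ range (D + 1), (m : ℂ) * χ m =
      D * ∑ m ∈ range (D + 1), χ m - ∑ m ∈ range (D + 1), (m : ℂ) * χ m := by
    conv_lhs => rw [← sum_range_reflect]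
    rw [mul_sum, ← sum_sub_distrib]
    refine sum_congr rfl fun m hm ↦ ?_
    have hmD : m ≤ D := Nat.lt_succ_iff.mp (mem_range.mp hm)
    have hneg : ((D - m : ℕ) : ZMod D) = -(m : ZMod D) := by
      simp [Nat.cast_sub hmD]
    rw [Nat.add_sub_cancel, hneg, heven.eval_neg, Nat.cast_sub hmD]
    ring
  rw [hsum, mul_zero, zero_sub, eq_neg_iff_add_eq_zero] at hreflect
  rw [partialSum_partialSum_eq, hA, mul_zero, zero_sub, neg_eq_zero]
  exact (partialSum_eq_sum_range (x := fun m : ℕ ↦ (m : ℂ) * χ m) (by simp) D).trans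
    (by linear_combination hreflect / 2)

end DirichletCharacter

theorem char_log_sum_deriv_general (D : ℕ) (hD : 1 < D)
    [NeZero D] (χ : DirichletCharacter ℂ D) (hprim : χ.IsPrimitive) (heven : χ.Even) :
    (∀ N : ℕ, 1 ≤ N →
      ‖(∑ n ∈ Finset.Icc 1 (N * D), χ (n : ZMod D) * (Real.log n : ℂ))
          + deriv (DirichletCharacter.LFunction χ) 0‖
        ≤ 2 * (D : ℝ) / N) ∧
    Filter.Tendsto
      (fun N : ℕ => ∑ n ∈ Finset.Icc 1 (N * D), χ (n : ZMod D) * (Real.log n : ℂ))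
      Filter.atTop (nhds (-(deriv (DirichletCharacter.LFunction χ) 0))) := by
  have hχ : χ ≠ 1 := fun h ↦ by
    rw [DirichletCharacter.isPrimitive_def, h, DirichletCharacter.conductor_one] at hprim
    omega
  have hA := periodic_partialSum χ.periodic_natCast (χ.partialSum_natCast_eq_zero hχ)
  have hC := periodic_partialSum hA (χ.partialSum_partialSum_natCast_eq_zero hχ heven)
  have hCB := norm_partialSum_le_of_periodic (NeZero.pos D) hC
    (norm_partialSum_le_of_periodic (NeZero.pos D) hA fun n ↦ χ.norm_le_one _)
  have hbound : ∀ N : ℕ, 1 ≤ N →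
      ‖(∑ n ∈ Icc 1 (N * D), χ (n : ZMod D) * (Real.log n : ℂ)) + deriv χ.LFunction 0‖ ≤
        2 * (D : ℝ) / N := fun N hN ↦ by
    refine (norm_sum_mul_log_add_deriv_le (by simpa using χ.map_zero' hD.ne') hCB
      (DirichletCharacter.differentiable_LFunction hχ) (fun s hs ↦ χ.LFunction_eq_LSeries hs)
      (by simpa using hA.nat_mul_eq N) (by simpa using hC.nat_mul_eq N)).trans ?_
    have hN0 : (0 : ℝ) < N := by exact_mod_cast hN
    rw [div_le_div_iff₀ (by positivity) hN0]
    push_cast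
    have hD0 : (0 : ℝ) ≤ D := D.cast_nonneg
    nlinarith [mul_nonneg (mul_nonneg hN0.le hD0) hD0]
  refine ⟨hbound, tendsto_iff_norm_sub_tendsto_zero.mpr <| squeeze_zero' ?_ ?_
    (tendsto_const_div_atTop_nhds_zero_nat (2 * (D : ℝ)))⟩
  · exact Eventually.of_forall fun N ↦ norm_nonneg _
  · filter_upwards [eventually_ge_atTop 1] with N hN
    simpa using hbound N hN

/-- Lemma 6.2: for a positive fundamental discriminant `Δ` with associated even real
primitive character `χ = χ_Δ`, one has `|∑_{n=1}^{NΔ} χ(n) log n + L'(0,χ)| ≤ 2Δ/N`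
for every `N ≥ 1`; in particular `∑_{n=1}^{NΔ} χ(n) log n → -L'(0,χ)` as `N → ∞`. -/
theorem char_log_sum_deriv (D : ℕ) (hD : 1 < D)
    (hfund : IsFundamentalDiscriminant (D : ℤ))
    [NeZero D] (χ : DirichletCharacter ℂ D) (hprim : χ.IsPrimitive) (heven : χ.Even)
    (hreal : ∀ a : ZMod D, (starRingEnd ℂ) (χ a) = χ a) :
    (∀ N : ℕ, 1 ≤ N →
      ‖(∑ n ∈ Finset.Icc 1 (N * D), χ (n : ZMod D) * (Real.log n : ℂ))
          + deriv (DirichletCharacter.LFunction χ) 0‖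
        ≤ 2 * (D : ℝ) / N) ∧
    Filter.Tendsto
      (fun N : ℕ => ∑ n ∈ Finset.Icc 1 (N * D), χ (n : ZMod D) * (Real.log n : ℂ))
      Filter.atTop (nhds (-(deriv (DirichletCharacter.LFunction χ) 0))) :=
  char_log_sum_deriv_general D hD χ hprim heven
end

section
/- For every real number H ≥ 2 and every integer k ≥ e²(log log H + 10), the sum of μ²(m)/m over squarefree integers m > H^k all of whose prime factors are at most H is less than e^{-k}. -/
/-!
Rankin's trick. A squarefree `H`-smooth `m > H ^ k` has more than `k` prime factors, so
`1 / m ≤ e ^ (-2 (k + 1)) ∏_{p ∣ m} e² / p`; summing over all sets of primes `p ≤ H` bounds the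
tail by `e ^ (-2 (k + 1)) ∏_{p ≤ H} (1 + e² / p) ≤ exp (-2 (k + 1) + e² ∑_{p ≤ H} 1 / p)`.
The Mertens-type bound `∑_{p ≤ N} 1 / p ≤ log log N + 4` comes by Abel summation from
`∑_{p ≤ N} log p / p ≤ log N + log 4`, itself a consequence of
`log N! = ∑_{d ≤ N} Λ(d) ⌊N / d⌋` and Chebyshev's bound `θ(N) ≤ N log 4`.
-/

open Nat hiding log
open Finset Real
open ArithmeticFunction hiding log

theorem sum_primesLE_log_mul_div_le (N : ℕ) :
    ∑ p ∈ primesLE N, log p * (N / p : ℕ) ≤ N * log N := by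
  have hsub : primesLE N ⊆ Ioc 0 N := fun p hp ↦
    mem_Ioc.mpr ⟨(prime_of_mem_primesLE hp).pos, le_of_mem_primesLE hp⟩
  calc ∑ p ∈ primesLE N, log p * (N / p : ℕ)
      = ∑ p ∈ primesLE N, Λ p * (N / p : ℕ) :=
        sum_congr rfl fun p hp ↦ by rw [vonMangoldt_apply_prime (prime_of_mem_primesLE hp)]
    _ ≤ ∑ n ∈ Ioc 0 N, Λ n * (N / n : ℕ) :=
        sum_le_sum_of_subset_of_nonneg hsub fun _ _ _ ↦ by positivity
    _ = ∑ n ∈ Ioc 0 N, log n := by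
        rw [← sum_Ioc_mul_zeta_eq_sum, vonMangoldt_mul_zeta]; rfl
    _ ≤ ∑ _n ∈ Ioc 0 N, log N := sum_le_sum fun n hn ↦
        Real.log_le_log (by exact_mod_cast (mem_Ioc.mp hn).1) (by exact_mod_cast (mem_Ioc.mp hn).2)
    _ = N * log N := by simp

theorem sum_primesLE_log_div_le (N : ℕ) :
    ∑ p ∈ primesLE N, log p / p ≤ log N + log 4 := by
  rcases N.eq_zero_or_pos with rfl | hN
  · simp [Real.log_nonneg]
  have hfloor (p : ℕ) : (N : ℝ) / p ≤ (N / p : ℕ) + 1 := by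
    rw [← Nat.floor_div_eq_div (K := ℝ)]
    exact (Nat.lt_floor_add_one _).le
  have hθ : ∑ p ∈ primesLE N, log p ≤ N * log 4 := by
    rw [← Chebyshev.theta_eq_sum_primesLE_log, mul_comm]
    exact Chebyshev.theta_le_log4_mul_x N.cast_nonneg
  refine le_of_mul_le_mul_left ?_ (Nat.cast_pos.mpr hN : (0 : ℝ) < N)
  calc (N : ℝ) * ∑ p ∈ primesLE N, log p / p
      = ∑ p ∈ primesLE N, log p * ((N : ℝ) / p) := by
        rw [mul_sum]; exact sum_congr rfl fun p _ ↦ by ring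
    _ ≤ ∑ p ∈ primesLE N, log p * ((N / p : ℕ) + 1) :=
        sum_le_sum fun p hp ↦ mul_le_mul_of_nonneg_left (hfloor p)
          (Real.log_natCast_nonneg p)
    _ = ∑ p ∈ primesLE N, log p * (N / p : ℕ) + ∑ p ∈ primesLE N, log p := by
        rw [← sum_add_distrib]; exact sum_congr rfl fun p _ ↦ by ring
    _ ≤ N * (log N + log 4) := by
        linarith [sum_primesLE_log_mul_div_le N]

/-- The remainder in the Abel summation of `∑ p⁻¹ = ∑ (log p / p) / log p`. Adding a prime
`p = N + 1` leaves it unchanged, and otherwise it decreases since `∑ log p / p - log 4 ≤ log N`. -/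
noncomputable def mertensError (N : ℕ) : ℝ :=
  ∑ p ∈ primesLE N, (p : ℝ)⁻¹ - (∑ p ∈ primesLE N, log p / p - log 4) / log N - log (log N)

theorem mertensError_succ (N : ℕ) :
    mertensError (N + 1) = ∑ p ∈ primesLE N, (p : ℝ)⁻¹
      - (∑ p ∈ primesLE N, log p / p - log 4) / log (N + 1 : ℕ) - log (log (N + 1 : ℕ)) := by
  unfold mertensError
  rw [primesLE_succ]
  split_ifs with hprime
  · have hlog : log (N + 1 : ℕ) ≠ 0 := (Real.log_pos (by exact_mod_cast hprime.one_lt)).ne'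
    rw [sum_insert (notMem_primesLE N), sum_insert (notMem_primesLE N)]
    field_simp
    ring
  · rfl

theorem mertensError_succ_le {N : ℕ} (hN : 2 ≤ N) : mertensError (N + 1) ≤ mertensError N := by
  set ℓ := log N
  set ℓ' := log (N + 1 : ℕ)
  have hℓ : 0 < ℓ := Real.log_pos (by exact_mod_cast hN)
  have hℓℓ' : ℓ ≤ ℓ' := Real.log_le_log (by positivity) (by exact_mod_cast N.le_succ)
  have hA : ∑ p ∈ primesLE N, log p / p - log 4 ≤ ℓ := by
    linarith [sum_primesLE_log_div_le N]
  have hlog : 1 - ℓ / ℓ' ≤ log ℓ' - log ℓ := by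
    have := Real.one_sub_inv_le_log_of_pos (div_pos (hℓ.trans_le hℓℓ') hℓ)
    rwa [inv_div, Real.log_div (hℓ.trans_le hℓℓ').ne' hℓ.ne'] at this
  have hinv : 0 ≤ ℓ⁻¹ - ℓ'⁻¹ := sub_nonneg.mpr (inv_anti₀ hℓ hℓℓ')
  have hdiff : (∑ p ∈ primesLE N, log p / p - log 4) * (ℓ⁻¹ - ℓ'⁻¹) ≤ 1 - ℓ / ℓ' := calc
    _ ≤ ℓ * (ℓ⁻¹ - ℓ'⁻¹) := mul_le_mul_of_nonneg_right hA hinv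
    _ = 1 - ℓ / ℓ' := by field_simp
  rw [mertensError_succ, mertensError, div_eq_mul_inv, div_eq_mul_inv]
  linarith

theorem mertensError_le {N : ℕ} (hN : 2 ≤ N) : mertensError N ≤ 2 - log (log 2) := by
  induction N, hN using Nat.le_induction with
  | base =>
    have h2 : primesLE 2 = {2} := by decide
    have hlog2 : log 2 ≠ 0 := (Real.log_pos one_lt_two).ne'
    have hlog4 : log 4 = 2 * log 2 := by
      rw [show (4 : ℝ) = 2 ^ 2 by norm_num, Real.log_pow, Nat.cast_ofNat]
    simp only [mertensError, h2, sum_singleton, Nat.cast_ofNat, hlog4]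
    field_simp
    linarith
  | succ N hN ih => exact (mertensError_succ_le hN).trans ih

theorem sum_primesLE_inv_le {N : ℕ} (hN : 2 ≤ N) :
    ∑ p ∈ primesLE N, (p : ℝ)⁻¹ ≤ log (log N) + 4 := by
  have hℓ : 0 < log N := Real.log_pos (by exact_mod_cast hN)
  have hA : (∑ p ∈ primesLE N, log p / p - log 4) / log N ≤ 1 :=
    (div_le_one hℓ).mpr (by linarith [sum_primesLE_log_div_le N])
  have hloglog2 : -log (log 2) ≤ 1 := by
    have hlog2 := Real.log_two_gt_d9
    have := Real.log_le_sub_one_of_pos (inv_pos.mpr (Real.log_pos one_lt_two))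
    rw [Real.log_inv] at this
    have : (log 2)⁻¹ ≤ 2 := by rw [inv_le_comm₀] <;> linarith
    linarith
  have := mertensError_le hN
  rw [mertensError] at this
  linarith

theorem sum_primesLE_floor_inv_le {H : ℝ} (hH : 2 ≤ H) :
    ∑ p ∈ primesLE ⌊H⌋₊, (p : ℝ)⁻¹ ≤ log (log H) + 4 := by
  have hN : 2 ≤ ⌊H⌋₊ := Nat.le_floor (by exact_mod_cast hH)
  have hNH : (⌊H⌋₊ : ℝ) ≤ H := Nat.floor_le (by linarith)
  have hlog : 0 < log ⌊H⌋₊ := Real.log_pos (by exact_mod_cast hN)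
  grw [sum_primesLE_inv_le hN, hNH]

theorem injOn_primeFactors_squarefree : Set.InjOn Nat.primeFactors {n | Squarefree n} :=
  fun m hm n hn h ↦ by
    rw [← prod_primeFactors_of_squarefree hm, ← prod_primeFactors_of_squarefree hn, h]

theorem lt_card_primeFactors_of_pow_lt {H : ℝ} (hH : 1 ≤ H) {m k : ℕ} (hm : Squarefree m)
    (hsmooth : ∀ p ∈ m.primeFactors, (p : ℝ) ≤ H) (hlt : H ^ k < m) :
    k < m.primeFactors.card := by
  by_contra! hcard
  have : (m : ℝ) ≤ H ^ k := calc
    (m : ℝ) = ∏ p ∈ m.primeFactors, (p : ℝ) := by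
      rw [← Nat.cast_prod, Nat.prod_primeFactors_of_squarefree hm]
    _ ≤ ∏ _p ∈ m.primeFactors, H := prod_le_prod (fun _ _ ↦ by positivity) hsmooth
    _ = H ^ m.primeFactors.card := prod_const H
    _ ≤ H ^ k := pow_le_pow_right₀ hH hcard
  linarith

theorem inv_prod_le_prod_div_div_pow {ι : Type*} (s : Finset ι) {a : ι → ℝ}
    (ha : ∀ i ∈ s, 0 ≤ a i) {c : ℝ} (hc : 1 ≤ c) {k : ℕ} (hk : k ≤ s.card) :
    (∏ i ∈ s, a i)⁻¹ ≤ (∏ i ∈ s, c / a i) / c ^ k := by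
  have hck : 1 ≤ c ^ s.card / c ^ k :=
    (one_le_div (by positivity)).mpr (pow_le_pow_right₀ hc hk)
  calc (∏ i ∈ s, a i)⁻¹ ≤ (c ^ s.card / c ^ k) * (∏ i ∈ s, a i)⁻¹ :=
        le_mul_of_one_le_left (inv_nonneg.mpr (prod_nonneg ha)) hck
    _ = (∏ i ∈ s, c / a i) / c ^ k := by rw [prod_div_distrib, prod_const]; ring

theorem tsum_le_sum_of_injective {α β : Type*} {f : α → ℝ} {g : β → ℝ} {s : Finset β}
    (e : α → β) (he : Function.Injective e) (hes : ∀ a, e a ∈ s) (hg : ∀ b ∈ s, 0 ≤ g b)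
    (hfg : ∀ a, f a ≤ g (e a)) : ∑' a, f a ≤ ∑ b ∈ s, g b := by
  have : Finite α := Finite.of_injective (fun a ↦ (⟨e a, hes a⟩ : s))
    fun a b hab ↦ he (congrArg Subtype.val hab)
  have := Fintype.ofFinite α
  classical
  calc ∑' a, f a = ∑ a, f a := tsum_fintype f
    _ ≤ ∑ a, g (e a) := sum_le_sum fun a _ ↦ hfg a
    _ = ∑ b ∈ univ.map ⟨e, he⟩, g b := (sum_map univ ⟨e, he⟩ g).symm
    _ ≤ ∑ b ∈ s, g b := sum_le_sum_of_subset_of_nonneg (by simpa [subset_iff] using hes)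
        fun b hb _ ↦ hg b hb

/-- For `H ≥ 2` and any integer `k ≥ e²(log log H + 10)`, the sum of `μ²(m)/m = 1/m`
over squarefree `H`-smooth integers `m > H^k` is less than `e^{-k}`. -/
theorem smooth_squarefree_tail (H : ℝ) (hH : 2 ≤ H) (k : ℕ)
    (hk : Real.exp 2 * (Real.log (Real.log H) + 10) ≤ (k : ℝ)) :
    ∑' m : {m : ℕ // Squarefree m ∧ H ^ k < (m : ℝ) ∧ ∀ p ∈ (m : ℕ).primeFactors, (p : ℝ) ≤ H},
        (1 : ℝ) / ((m : ℕ) : ℝ)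
      < Real.exp (-(k : ℝ)) := by
  set P := primesLE ⌊H⌋₊
  have hsub (m : ℕ) (hm : ∀ p ∈ m.primeFactors, (p : ℝ) ≤ H) : m.primeFactors ∈ P.powerset :=
    mem_powerset.mpr fun p hp ↦ mem_primesLE.mpr
      ⟨Nat.le_floor (hm p hp), Nat.prime_of_mem_primeFactors hp⟩
  have hexp : ∑ p ∈ P, exp 2 / p ≤ k := by
    simp_rw [div_eq_mul_inv, ← mul_sum]
    grw [sum_primesLE_floor_inv_le hH, ← hk]
    gcongr
    norm_num
  calc _ ≤ ∑ t ∈ P.powerset, (∏ p ∈ t, exp 2 / p) / exp 2 ^ (k + 1) := by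
        refine tsum_le_sum_of_injective (fun m ↦ m.1.primeFactors)
          (fun m n h ↦ Subtype.ext (injOn_primeFactors_squarefree m.2.1 n.2.1 h))
          (fun m ↦ hsub m m.2.2.2) (fun t _ ↦ by positivity)
          fun ⟨m, hm, hlt, hsmooth⟩ ↦ ?_
        have hcard := lt_card_primeFactors_of_pow_lt (by linarith) hm hsmooth hlt
        grw [← inv_prod_le_prod_div_div_pow _ (fun _ _ ↦ by positivity)
          (one_le_exp zero_le_two) hcard]
        rw [← Nat.cast_prod, Nat.prod_primeFactors_of_squarefree hm, one_div]
    _ = (∏ p ∈ P, (1 + exp 2 / p)) / exp 2 ^ (k + 1) := by rw [prod_one_add, sum_div]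
    _ ≤ exp (∑ p ∈ P, exp 2 / p) / exp 2 ^ (k + 1) := by
        grw [prod_one_add_le_exp_sum _ fun p ↦ by positivity]
    _ ≤ exp k / exp ((k + 1) * 2) := by
        rw [← exp_nat_mul]
        push_cast
        gcongr
    _ < exp (-k) := by
        rw [← exp_sub, exp_lt_exp]; linarith
end
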